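/- arXiv:2006.07260 — 8 statements merged into one kernel-verified Lean document; each statement's English description precedes it below -/
import Mathlib

section
/- In the discrete setting with N cost matrices, the utilitarian problem inf over (P_1,...,P_N) ∈ Γ^N_{a,b} of Σ_i ⟨P_i, C_i⟩ equals the single-cost optimal transport value W_{min_i C_i}(a,b), where min_i C_i is the entrywise minimum of the matrices C_i. -/
open Finset

/-- Frobenius inner product of two matrices. -/
def dot {n m : ℕ} (P C : Matrix (Fin n) (Fin m) ℝ) : ℝ := ∑ i, ∑ j, P i j * C i j

/-- `P` is a coupling of the probability vectors `a` and `b`. -/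
def IsCoupling {n m : ℕ} (a : Fin n → ℝ) (b : Fin m → ℝ)
    (P : Matrix (Fin n) (Fin m) ℝ) : Prop :=
  (∀ i j, 0 ≤ P i j) ∧ (∀ i, ∑ j, P i j = a i) ∧ (∀ j, ∑ i, P i j = b j)

/-- Discrete optimal transport value. -/
noncomputable def W {n m : ℕ} (a : Fin n → ℝ) (b : Fin m → ℝ)
    (C : Matrix (Fin n) (Fin m) ℝ) : ℝ :=
  sInf {t | ∃ P, IsCoupling a b P ∧ t = dot P C}

/-- The constraint set `Γ^N_{a,b}` of coupling decompositions. -/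
def Gamma (N : ℕ) {n m : ℕ} (a : Fin n → ℝ) (b : Fin m → ℝ) :
    Set (Fin N → Matrix (Fin n) (Fin m) ℝ) :=
  {P | (∀ k i j, 0 ≤ P k i j) ∧ (∀ i, ∑ k, ∑ j, P k i j = a i) ∧
       (∀ j, ∑ k, ∑ i, P k i j = b j)}

/-- Discrete equitable optimal transport value. -/
noncomputable def EOT {N n m : ℕ} (a : Fin n → ℝ) (b : Fin m → ℝ)
    (C : Fin N → Matrix (Fin n) (Fin m) ℝ) : ℝ :=
  sInf {t | ∃ P ∈ Gamma N a b, t = ⨆ i, dot (P i) (C i)}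

/-!
Summing a plan `(P_k) ∈ Γ^N_{a,b}` gives a coupling `∑ₖ P_k` whose cost against `minₖ C_k` is at
most `∑ₖ ⟨P_k, C_k⟩`, since the `P_k` are nonnegative. Conversely a coupling `Q` is the sum of the
plan that puts each entry `Q i j` on an index `k` attaining `minₖ C_k i j`, and this plan costs
exactly `⟨Q, minₖ C_k⟩`. So every value of either problem is bounded below by a value of the
other, and the two infima agree.
-/

section

variable {N n m : ℕ} {a : Fin n → ℝ} {b : Fin m → ℝ}

lemma isCoupling_sum_of_mem_Gamma {P : Fin N → Matrix (Fin n) (Fin m) ℝ}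
    (hP : P ∈ Gamma N a b) : IsCoupling a b (∑ k, P k) := by
  obtain ⟨hP0, hPa, hPb⟩ := hP
  refine ⟨fun i j => ?_, fun i => ?_, fun j => ?_⟩
  · rw [Matrix.sum_apply]
    exact sum_nonneg fun k _ => hP0 k i j
  · simp_rw [Matrix.sum_apply]
    rw [sum_comm, hPa]
  · simp_rw [Matrix.sum_apply]
    rw [sum_comm, hPb]

lemma dot_sum_iInf_le_sum_dot {ι : Type*} [Fintype ι] {P C : ι → Matrix (Fin n) (Fin m) ℝ}
    (hP : ∀ k i j, 0 ≤ P k i j) :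
    dot (∑ k, P k) (fun i j => ⨅ k, C k i j) ≤ ∑ k, dot (P k) (C k) := by
  calc dot (∑ k, P k) (fun i j => ⨅ k, C k i j)
      = ∑ i, ∑ j, ∑ k, P k i j * ⨅ k', C k' i j := by
        simp only [dot, Matrix.sum_apply, sum_mul]
    _ ≤ ∑ i, ∑ j, ∑ k, P k i j * C k i j := by
        gcongr with i _ j _ k _
        · exact hP k i j
        · exact ciInf_le (Set.finite_range _).bddBelow k
    _ = ∑ k, dot (P k) (C k) := by
        simp only [dot]
        simp_rw [sum_comm (γ := ι)]

def concentrate (σ : Fin n → Fin m → Fin N) (Q : Matrix (Fin n) (Fin m) ℝ) :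
    Fin N → Matrix (Fin n) (Fin m) ℝ :=
  fun k i j => if σ i j = k then Q i j else 0

lemma concentrate_mem_Gamma (σ : Fin n → Fin m → Fin N) {Q : Matrix (Fin n) (Fin m) ℝ}
    (hQ : IsCoupling a b Q) : concentrate σ Q ∈ Gamma N a b := by
  obtain ⟨hQ0, hQa, hQb⟩ := hQ
  refine ⟨fun k i j => ?_, fun i => ?_, fun j => ?_⟩
  · unfold concentrate
    split_ifs
    exacts [hQ0 i j, le_rfl]
  · rw [sum_comm]
    simp [concentrate, hQa i]
  · rw [sum_comm]
    simp [concentrate, hQb j]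

lemma sum_dot_concentrate (σ : Fin n → Fin m → Fin N) (Q : Matrix (Fin n) (Fin m) ℝ)
    (C : Fin N → Matrix (Fin n) (Fin m) ℝ) :
    ∑ k, dot (concentrate σ Q k) (C k) = dot Q (fun i j => C (σ i j) i j) := by
  simp only [dot]
  rw [sum_comm]
  refine sum_congr rfl fun i _ => ?_
  rw [sum_comm]
  simp [concentrate, ite_mul]

end

theorem stmt_3_general (N n m : ℕ) (hN : 0 < N) (a : Fin n → ℝ) (b : Fin m → ℝ)
    (C : Fin N → Matrix (Fin n) (Fin m) ℝ) :
    sInf {t | ∃ P ∈ Gamma N a b, t = ∑ i, dot (P i) (C i)} =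
      W a b (fun k l => ⨅ i, C i k l) := by
  have : Nonempty (Fin N) := ⟨⟨0, hN⟩⟩
  choose σ hσ using fun i j => exists_eq_ciInf_of_finite (f := fun k => C k i j)
  apply csInf_eq_csInf_of_forall_exists_le
  · rintro _ ⟨P, hP, rfl⟩
    exact ⟨_, ⟨_, isCoupling_sum_of_mem_Gamma hP, rfl⟩, dot_sum_iInf_le_sum_dot hP.1⟩
  · rintro _ ⟨Q, hQ, rfl⟩
    refine ⟨_, ⟨_, concentrate_mem_Gamma σ hQ, rfl⟩, ?_⟩
    simp only [sum_dot_concentrate, hσ, le_rfl]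

/-- The utilitarian problem `inf_{(P_i)∈Γ^N_{a,b}} ∑_i ⟨P_i,C_i⟩` equals
`W_{min_i C_i}(a,b)` where `min_i C_i` is the entrywise minimum. -/
theorem stmt_3 (N n m : ℕ) (hN : 0 < N) (a : Fin n → ℝ) (b : Fin m → ℝ)
    (ha : a ∈ stdSimplex ℝ (Fin n)) (hb : b ∈ stdSimplex ℝ (Fin m))
    (C : Fin N → Matrix (Fin n) (Fin m) ℝ) :
    sInf {t | ∃ P ∈ Gamma N a b, t = ∑ i, dot (P i) (C i)} =
      W a b (fun k l => ⨅ i, C i k l) :=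
  stmt_3_general N n m hN a b C
end

section
/- For discrete EOT with N strictly positive cost matrices C_i, any minimizer (P_1*,...,P_N*) of max_i ⟨P_i, C_i⟩ over Γ^N_{a,b} satisfies ⟨P_i*, C_i⟩ = ⟨P_j*, C_j⟩ for all i, j (the optimal solution equalizes all agents' costs). -/
/-!
Suppose some agent `j` pays strictly less than the maximal cost `M` of a minimizer `P`.
Mix `P` with the plan `R` that hands the whole transport `∑ₖ Pₖ` to agent `j`:
`Q = (1 - t) • P + t • R` again lies in the convex set `Γ`. Every other agent now pays
`(1 - t) ⟨Pₖ, Cₖ⟩ < M` (here `M > 0` because costs are nonnegative and `j` pays less than `M`),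
while agent `j` pays `(1 - t) ⟨Pⱼ, Cⱼ⟩ + t ⟨Rⱼ, Cⱼ⟩`, which stays below `M` for small `t > 0`.
So `Q` has a strictly smaller maximal cost than `P`.
-/

open Finset

open Filter Topology

lemma dot_nonneg {n m : ℕ} {P C : Matrix (Fin n) (Fin m) ℝ}
    (hP : ∀ i j, 0 ≤ P i j) (hC : ∀ i j, 0 ≤ C i j) : 0 ≤ dot P C :=
  sum_nonneg fun i _ => sum_nonneg fun j _ => mul_nonneg (hP i j) (hC i j)

lemma dot_zero_left {n m : ℕ} (C : Matrix (Fin n) (Fin m) ℝ) : dot 0 C = 0 := by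
  simp [dot]

lemma dot_smul_add_smul {n m : ℕ} (s t : ℝ) (P Q C : Matrix (Fin n) (Fin m) ℝ) :
    dot (s • P + t • Q) C = s * dot P C + t * dot Q C := by
  simp only [dot, Matrix.add_apply, Matrix.smul_apply, smul_eq_mul, add_mul, sum_add_distrib,
    mul_sum, mul_assoc]

lemma convex_Gamma (N : ℕ) {n m : ℕ} (a : Fin n → ℝ) (b : Fin m → ℝ) :
    Convex ℝ (Gamma N a b) := by
  rintro P ⟨hP0, hPa, hPb⟩ Q ⟨hQ0, hQa, hQb⟩ s t hs ht hst
  refine ⟨fun k i j => ?_, fun i => ?_, fun j => ?_⟩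
  · simp only [Pi.add_apply, Pi.smul_apply, Matrix.add_apply, Matrix.smul_apply, smul_eq_mul]
    exact add_nonneg (mul_nonneg hs (hP0 k i j)) (mul_nonneg ht (hQ0 k i j))
  · simp only [Pi.add_apply, Pi.smul_apply, Matrix.add_apply, Matrix.smul_apply, smul_eq_mul,
      sum_add_distrib, ← mul_sum, hPa, hQa, ← add_mul, hst, one_mul]
  · simp only [Pi.add_apply, Pi.smul_apply, Matrix.add_apply, Matrix.smul_apply, smul_eq_mul,
      sum_add_distrib, ← mul_sum, hPb, hQb, ← add_mul, hst, one_mul]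

lemma single_sum_mem_Gamma {N n m : ℕ} {a : Fin n → ℝ} {b : Fin m → ℝ}
    {P : Fin N → Matrix (Fin n) (Fin m) ℝ} (hP : P ∈ Gamma N a b) (j : Fin N) :
    Pi.single j (∑ k, P k) ∈ Gamma N a b := by
  obtain ⟨hP0, hPa, hPb⟩ := hP
  have hsingle : ∀ k x y,
      (Pi.single j (∑ l, P l) : Fin N → Matrix (Fin n) (Fin m) ℝ) k x y =
        if k = j then ∑ l, P l x y else 0 := by
    intro k x y
    rcases eq_or_ne k j with rfl | hkj
    · simp [Matrix.sum_apply]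
    · simp [hkj]
  refine ⟨fun k x y => ?_, fun x => ?_, fun y => ?_⟩
  · rw [hsingle]
    split_ifs
    exacts [sum_nonneg fun l _ => hP0 l x y, le_rfl]
  · simp only [hsingle]
    rw [sum_comm]
    simpa [sum_comm (γ := Fin m)] using hPa x
  · simp only [hsingle]
    rw [sum_comm]
    simpa [sum_comm (γ := Fin n)] using hPb y

lemma exists_mem_Gamma_forall_dot_lt {N n m : ℕ} {a : Fin n → ℝ} {b : Fin m → ℝ}
    {C : Fin N → Matrix (Fin n) (Fin m) ℝ} (hC : ∀ k x y, 0 ≤ C k x y)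
    {P : Fin N → Matrix (Fin n) (Fin m) ℝ} (hP : P ∈ Gamma N a b) {M : ℝ}
    (hPM : ∀ k, dot (P k) (C k) ≤ M) {j : Fin N} (hj : dot (P j) (C j) < M) :
    ∃ Q ∈ Gamma N a b, ∀ k, dot (Q k) (C k) < M := by
  set R : Fin N → Matrix (Fin n) (Fin m) ℝ := Pi.single j (∑ k, P k)
  have hM : 0 < M := (dot_nonneg (hP.1 j) (hC j)).trans_lt hj
  have hsmall : ∀ᶠ t in 𝓝 (0 : ℝ),
      t < 1 ∧ (1 - t) * dot (P j) (C j) + t * dot (R j) (C j) < M := by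
    refine (eventually_lt_nhds one_pos).and
      (Tendsto.eventually_lt_const (by simpa using hj) (Continuous.tendsto (by fun_prop) 0))
  obtain ⟨t, ⟨ht1, hjt⟩, ht0⟩ := ((hsmall.filter_mono nhdsWithin_le_nhds).and
    (self_mem_nhdsWithin (s := Set.Ioi 0))).exists
  refine ⟨(1 - t) • P + t • R,
    convex_Gamma N a b hP (single_sum_mem_Gamma hP j) (by linarith) ht0.le (by ring),
    fun k => ?_⟩
  rw [Pi.add_apply, Pi.smul_apply, Pi.smul_apply, dot_smul_add_smul]
  rcases eq_or_ne k j with rfl | hkj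
  · exact hjt
  · rw [show R k = 0 from Pi.single_eq_of_ne hkj _, dot_zero_left]
    nlinarith [hPM k]

theorem stmt_6_general (N n m : ℕ) (a : Fin n → ℝ) (b : Fin m → ℝ)
    (C : Fin N → Matrix (Fin n) (Fin m) ℝ) (hC : ∀ i k l, 0 < C i k l)
    (P : Fin N → Matrix (Fin n) (Fin m) ℝ) (hP : P ∈ Gamma N a b)
    (hopt : ∀ Q ∈ Gamma N a b,
      (⨆ i, dot (P i) (C i)) ≤ ⨆ i, dot (Q i) (C i)) :
    ∀ i j, dot (P i) (C i) = dot (P j) (C j) := by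
  intro i j
  have : Nonempty (Fin N) := ⟨i⟩
  set M := ⨆ k, dot (P k) (C k)
  have hPM : ∀ k, dot (P k) (C k) ≤ M := le_ciSup (Finite.bddAbove_range _)
  suffices h : ∀ k, dot (P k) (C k) = M by rw [h i, h j]
  intro k
  by_contra hk
  obtain ⟨Q, hQ, hQM⟩ :=
    exists_mem_Gamma_forall_dot_lt (fun k x y => (hC k x y).le) hP hPM ((hPM k).lt_of_ne hk)
  obtain ⟨l, hl⟩ := exists_eq_ciSup_of_finite (f := fun k => dot (Q k) (C k))
  exact (hopt Q hQ).not_gt (hl ▸ hQM l)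

/-- With strictly positive costs and positive marginals, any minimizer of
`max_i ⟨P_i,C_i⟩` over `Γ^N_{a,b}` equalizes all agents' costs. -/
theorem stmt_6 (N n m : ℕ) (hN : 0 < N) (a : Fin n → ℝ) (b : Fin m → ℝ)
    (ha : a ∈ stdSimplex ℝ (Fin n)) (hb : b ∈ stdSimplex ℝ (Fin m))
    (ha0 : ∀ i, 0 < a i) (hb0 : ∀ j, 0 < b j)
    (C : Fin N → Matrix (Fin n) (Fin m) ℝ) (hC : ∀ i k l, 0 < C i k l)
    (P : Fin N → Matrix (Fin n) (Fin m) ℝ) (hP : P ∈ Gamma N a b)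
    (hopt : ∀ Q ∈ Gamma N a b,
      (⨆ i, dot (P i) (C i)) ≤ ⨆ i, dot (Q i) (C i)) :
    ∀ i j, dot (P i) (C i) = dot (P j) (C j) :=
  stmt_6_general N n m a b C hC P hP hopt
end

section
/- Discrete EOT equals a sup-inf: EOT_C(a,b) = sup_{λ∈Δ_N} inf_{(P_i)∈Γ^N_{a,b}} Σ_i λ_i ⟨P_i, C_i⟩, where Δ_N is the probability simplex. -/
open Finset

/-- Every continuous linear functional on `Fin N → ℝ` is given by coordinates. -/
lemma clm_repr {N : ℕ} (f : (Fin N → ℝ) →L[ℝ] ℝ) (x : Fin N → ℝ) :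
    f x = ∑ k, x k * f (Pi.single k 1) := by
  have hx : x = ∑ k, x k • (Pi.single k (1:ℝ) : Fin N → ℝ) := by
    funext j
    simp [Pi.single_apply]
  conv_lhs => rw [hx]
  rw [map_sum]
  simp [map_smul, smul_eq_mul]

/-- `Γ^N_{a,b}` is convex. -/
lemma gamma_convex {N n m : ℕ} (a : Fin n → ℝ) (b : Fin m → ℝ) :
    Convex ℝ (Gamma N a b) := by
  rintro P hP Q hQ c d hc hd hcd
  refine ⟨fun k i j => ?_, fun i => ?_, fun j => ?_⟩
  · have := hP.1 k i j; have := hQ.1 k i j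
    simp only [Pi.add_apply, Pi.smul_apply, Matrix.add_apply, Matrix.smul_apply, smul_eq_mul]
    positivity
  · simp only [Pi.add_apply, Pi.smul_apply, Matrix.add_apply, Matrix.smul_apply, smul_eq_mul,
      Finset.sum_add_distrib, ← Finset.mul_sum, hP.2.1 i, hQ.2.1 i]
    linear_combination (a i) * hcd
  · simp only [Pi.add_apply, Pi.smul_apply, Matrix.add_apply, Matrix.smul_apply, smul_eq_mul,
      Finset.sum_add_distrib, ← Finset.mul_sum, hP.2.2 j, hQ.2.2 j]
    linear_combination (b j) * hcd

lemma dot_abs_bound {n m : ℕ} (P C : Matrix (Fin n) (Fin m) ℝ)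
    (h0 : ∀ i j, 0 ≤ P i j) (h1 : ∀ i j, P i j ≤ 1) :
    |dot P C| ≤ ∑ i, ∑ j, |C i j| := by
  calc |dot P C| ≤ ∑ i, |∑ j, P i j * C i j| := Finset.abs_sum_le_sum_abs _ _
    _ ≤ ∑ i, ∑ j, |P i j * C i j| :=
        Finset.sum_le_sum fun i _ => Finset.abs_sum_le_sum_abs _ _
    _ ≤ ∑ i, ∑ j, |C i j| := by
        refine Finset.sum_le_sum fun i _ => Finset.sum_le_sum fun j _ => ?_
        rw [abs_mul, abs_of_nonneg (h0 i j)]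
        calc P i j * |C i j| ≤ 1 * |C i j| :=
              mul_le_mul_of_nonneg_right (h1 i j) (abs_nonneg _)
          _ = |C i j| := one_mul _

lemma gamma_entry_le_one {N n m : ℕ} {a : Fin n → ℝ} {b : Fin m → ℝ}
    (ha : a ∈ stdSimplex ℝ (Fin n))
    {P : Fin N → Matrix (Fin n) (Fin m) ℝ} (hP : P ∈ Gamma N a b)
    (k : Fin N) (i : Fin n) (j : Fin m) : P k i j ≤ 1 := by
  have h1 : P k i j ≤ ∑ j', P k i j' :=
    Finset.single_le_sum (fun j' _ => hP.1 k i j') (mem_univ j)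
  have h2 : ∑ j', P k i j' ≤ ∑ k', ∑ j', P k' i j' :=
    Finset.single_le_sum (f := fun k' => ∑ j', P k' i j')
      (fun k' _ => Finset.sum_nonneg fun j' _ => hP.1 k' i j') (mem_univ k)
  have h3 : a i ≤ 1 := by
    have := Finset.single_le_sum (fun i' _ => ha.1 i') (mem_univ i)
    rw [ha.2] at this; exact this
  calc P k i j ≤ ∑ k', ∑ j', P k' i j' := h1.trans h2
    _ = a i := hP.2.1 i
    _ ≤ 1 := h3

lemma prod_coupling_mem {N n m : ℕ} (hN : 0 < N) {a : Fin n → ℝ} {b : Fin m → ℝ}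
    (ha : a ∈ stdSimplex ℝ (Fin n)) (hb : b ∈ stdSimplex ℝ (Fin m)) :
    (fun (_ : Fin N) (i : Fin n) (j : Fin m) => a i * b j / N) ∈ Gamma N a b := by
  have hNR : (0:ℝ) < N := by exact_mod_cast hN
  refine ⟨fun k i j => div_nonneg (mul_nonneg (ha.1 i) (hb.1 j)) hNR.le, fun i => ?_, fun j => ?_⟩
  · have : ∀ k : Fin N, ∑ j, a i * b j / (N:ℝ) = a i / N := by
      intro k
      rw [← Finset.sum_div, ← Finset.mul_sum, hb.2, mul_one]
    rw [Finset.sum_congr rfl fun k _ => this k, Finset.sum_const, card_univ, Fintype.card_fin,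
      nsmul_eq_mul]
    field_simp
  · have : ∀ k : Fin N, ∑ i, a i * b j / (N:ℝ) = b j / N := by
      intro k
      rw [← Finset.sum_div, ← Finset.sum_mul, ha.2, one_mul]
    rw [Finset.sum_congr rfl fun k _ => this k, Finset.sum_const, card_univ, Fintype.card_fin,
      nsmul_eq_mul]
    field_simp

/-- Minimax exchange: `EOT_C(a,b) = sup_{λ∈Δ_N} inf_{(P_i)∈Γ^N_{a,b}} ∑_i λᵢ⟨P_i,C_i⟩`. -/
theorem stmt_7 (N n m : ℕ) (hN : 0 < N) (a : Fin n → ℝ) (b : Fin m → ℝ)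
    (ha : a ∈ stdSimplex ℝ (Fin n)) (hb : b ∈ stdSimplex ℝ (Fin m))
    (C : Fin N → Matrix (Fin n) (Fin m) ℝ) :
    EOT a b C =
      sSup {t | ∃ l ∈ stdSimplex ℝ (Fin N),
        t = sInf {s | ∃ P ∈ Gamma N a b, s = ∑ i, l i * dot (P i) (C i)}} := by
  haveI : Nonempty (Fin N) := ⟨⟨0, hN⟩⟩
  have hNR : (0:ℝ) < N := by exact_mod_cast hN
  unfold EOT
  set M : ℝ := ∑ k, ∑ i, ∑ j, |C k i j| with hMdef
  -- bound on dot products over Gamma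
  have hdotabs : ∀ P ∈ Gamma N a b, ∀ k, |dot (P k) (C k)| ≤ M := by
    intro P hP k
    refine (dot_abs_bound (P k) (C k) (hP.1 k) (gamma_entry_le_one ha hP k)).trans ?_
    exact Finset.single_le_sum (f := fun k' => ∑ i, ∑ j, |C k' i j|)
      (fun k' _ => Finset.sum_nonneg fun _ _ => Finset.sum_nonneg fun _ _ => abs_nonneg _)
      (mem_univ k)
  have hP0 := prod_coupling_mem (N := N) hN ha hb
  -- facts about the set T
  have hTne : {t | ∃ P ∈ Gamma N a b, t = ⨆ i, dot (P i) (C i)}.Nonempty := ⟨_, _, hP0, rfl⟩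
  have hTbdd : BddBelow {t | ∃ P ∈ Gamma N a b, t = ⨆ i, dot (P i) (C i)} := by
    refine ⟨-M, ?_⟩
    rintro t ⟨P, hP, rfl⟩
    have h1 : -M ≤ dot (P ⟨0, hN⟩) (C ⟨0, hN⟩) := (abs_le.mp (hdotabs P hP _)).1
    exact h1.trans (le_ciSup (f := fun i => dot (P i) (C i)) ((Set.finite_range _).bddAbove) (⟨0, hN⟩ : Fin N))
  -- facts about the sets S_l
  have hSlne : ∀ l : Fin N → ℝ,
      {s | ∃ P ∈ Gamma N a b, s = ∑ i, l i * dot (P i) (C i)}.Nonempty :=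
    fun l => ⟨_, _, hP0, rfl⟩
  have hSlabs : ∀ l ∈ stdSimplex ℝ (Fin N), ∀ P ∈ Gamma N a b,
      |∑ k, l k * dot (P k) (C k)| ≤ M := by
    intro l hl P hP
    calc |∑ k, l k * dot (P k) (C k)| ≤ ∑ k, |l k * dot (P k) (C k)| :=
          Finset.abs_sum_le_sum_abs _ _
      _ ≤ ∑ k, l k * M := Finset.sum_le_sum fun k _ => by
          rw [abs_mul, abs_of_nonneg (hl.1 k)]
          exact mul_le_mul_of_nonneg_left (hdotabs P hP k) (hl.1 k)
      _ = M := by rw [← Finset.sum_mul, hl.2, one_mul]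
  have hSlbdd : ∀ l ∈ stdSimplex ℝ (Fin N),
      BddBelow {s | ∃ P ∈ Gamma N a b, s = ∑ i, l i * dot (P i) (C i)} := by
    intro l hl
    refine ⟨-M, ?_⟩
    rintro s ⟨P, hP, rfl⟩
    linarith [(abs_le.mp (hSlabs l hl P hP)).1]
  -- the easy direction: each weighted inf is below the EOT value
  have key_le : ∀ l ∈ stdSimplex ℝ (Fin N),
      sInf {s | ∃ P ∈ Gamma N a b, s = ∑ i, l i * dot (P i) (C i)} ≤
        sInf {t | ∃ P ∈ Gamma N a b, t = ⨆ i, dot (P i) (C i)} := by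
    intro l hl
    apply le_csInf hTne
    rintro t ⟨P, hP, rfl⟩
    have hb1 : BddAbove (Set.range fun k => dot (P k) (C k)) := (Set.finite_range _).bddAbove
    have h2 : ∑ k, l k * dot (P k) (C k) ≤ ⨆ k, dot (P k) (C k) := by
      calc ∑ k, l k * dot (P k) (C k) ≤ ∑ k, l k * ⨆ k', dot (P k') (C k') :=
            Finset.sum_le_sum fun k _ =>
              mul_le_mul_of_nonneg_left (le_ciSup hb1 k) (hl.1 k)
        _ = ⨆ k', dot (P k') (C k') := by rw [← Finset.sum_mul, hl.2, one_mul]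
    exact (csInf_le (hSlbdd l hl) ⟨P, hP, rfl⟩).trans h2
  -- nonemptiness and boundedness of the sup set
  have hunif : (fun _ : Fin N => (N:ℝ)⁻¹) ∈ stdSimplex ℝ (Fin N) := by
    refine ⟨fun k => by positivity, ?_⟩
    rw [Finset.sum_const, card_univ, Fintype.card_fin, nsmul_eq_mul, mul_inv_cancel₀ hNR.ne']
  have hSSne : {t | ∃ l ∈ stdSimplex ℝ (Fin N),
      t = sInf {s | ∃ P ∈ Gamma N a b, s = ∑ i, l i * dot (P i) (C i)}}.Nonempty :=
    ⟨_, _, hunif, rfl⟩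
  have hSSbdd : BddAbove {t | ∃ l ∈ stdSimplex ℝ (Fin N),
      t = sInf {s | ∃ P ∈ Gamma N a b, s = ∑ i, l i * dot (P i) (C i)}} := by
    refine ⟨sInf {t | ∃ P ∈ Gamma N a b, t = ⨆ i, dot (P i) (C i)}, ?_⟩
    rintro t ⟨l, hl, rfl⟩
    exact key_le l hl
  refine le_antisymm ?_ (csSup_le hSSne ?_)
  swap
  · rintro t ⟨l, hl, rfl⟩
    exact key_le l hl
  -- the hard direction via separation
  by_contra hc
  push_neg at hc
  obtain ⟨r, hr1, hr2⟩ := exists_between hc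
  set U : Set (Fin N → ℝ) := {x | ∀ k, x k < r} with hUdef
  set K : Set (Fin N → ℝ) :=
    (fun (P : Fin N → Matrix (Fin n) (Fin m) ℝ) (k : Fin N) => dot (P k) (C k)) ''
      Gamma N a b with hKdef
  have hUeq : U = ⋂ k, {x : Fin N → ℝ | x k < r} := by
    ext x; simp [hUdef, Set.mem_iInter]
  have hUopen : IsOpen U := by
    rw [hUeq]
    exact isOpen_iInter_of_finite fun k => isOpen_lt (continuous_apply k) continuous_const
  have hUconv : Convex ℝ U := by
    rw [hUeq]
    exact convex_iInter fun k =>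
      convex_halfSpace_lt ⟨fun x y => rfl, fun c x => rfl⟩ r
  have hlin : IsLinearMap ℝ
      (fun (P : Fin N → Matrix (Fin n) (Fin m) ℝ) (k : Fin N) => dot (P k) (C k)) := by
    constructor
    · intro P Q
      funext k
      simp [dot, add_mul, Finset.sum_add_distrib]
    · intro c P
      funext k
      simp [dot, Finset.mul_sum, mul_assoc]
  have hKconv : Convex ℝ K := (gamma_convex a b).is_linear_image hlin
  have hdisj : Disjoint U K := by
    rw [Set.disjoint_left]
    intro x hxU hxK
    obtain ⟨P, hP, rfl⟩ := hxK
    have h1 : sInf {t | ∃ P ∈ Gamma N a b, t = ⨆ i, dot (P i) (C i)} ≤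
        ⨆ k, dot (P k) (C k) := csInf_le hTbdd ⟨P, hP, rfl⟩
    have h2 : (⨆ k, dot (P k) (C k)) ≤ r := ciSup_le fun k => le_of_lt (hxU k)
    linarith
  obtain ⟨f, u, hfU, hfK⟩ := geometric_hahn_banach_open hUconv hUopen hKconv hdisj
  set μ : Fin N → ℝ := fun k => f (Pi.single k 1) with hμdef
  have hrepr : ∀ x, f x = ∑ k, x k * μ k := clm_repr f
  have hx0 : (fun _ : Fin N => r - 1) ∈ U := fun k => by show r - 1 < r; linarith
  have hfx0 : f (fun _ : Fin N => r - 1) < u := hfU _ hx0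
  -- nonnegativity of the separating coefficients
  have hμnn : ∀ k, 0 ≤ μ k := by
    intro k
    by_contra hneg
    push_neg at hneg
    set t : ℝ := (u - f (fun _ : Fin N => r - 1) + 1) / (-μ k) with htdef
    have ht : 0 < t := div_pos (by linarith) (by linarith)
    have hmem : ((fun _ : Fin N => r - 1) - t • (Pi.single k (1:ℝ) : Fin N → ℝ)) ∈ U := by
      intro j
      show (r - 1) - t * (Pi.single k (1:ℝ) : Fin N → ℝ) j < r
      by_cases hj : j = k
      · subst hj; rw [Pi.single_eq_same]; linarith
      · rw [Pi.single_eq_of_ne hj]; linarith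
    have h3 := hfU _ hmem
    rw [map_sub, map_smul] at h3
    simp only [smul_eq_mul] at h3
    have h4 : t * (-μ k) = u - f (fun _ : Fin N => r - 1) + 1 := by
      rw [htdef, div_mul_cancel₀]
      linarith
    rw [mul_neg] at h4
    linarith
  -- positivity of the total mass of μ
  have hSpos : 0 < ∑ k, μ k := by
    rcases (Finset.sum_nonneg fun k (_ : k ∈ univ) => hμnn k).lt_or_eq with h | h
    · exact h
    · exfalso
      have hall : ∀ k, μ k = 0 := fun k =>
        (Finset.sum_eq_zero_iff_of_nonneg fun k' _ => hμnn k').mp h.symm k (mem_univ k)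
      have hy0 : (fun k => dot ((fun (_ : Fin N) i j => a i * b j / (N:ℝ)) k) (C k)) ∈ K :=
        ⟨_, hP0, rfl⟩
      have h5 := hfK _ hy0
      rw [hrepr] at h5
      simp only [hall, mul_zero, Finset.sum_const_zero] at h5
      have h6 := hfx0
      rw [hrepr] at h6
      simp only [hall, mul_zero, Finset.sum_const_zero] at h6
      linarith
  -- r is below the normalized threshold
  have hru : r ≤ u / (∑ k, μ k) := by
    by_contra h
    push_neg at h
    have hmem : (fun _ : Fin N => u / (∑ k, μ k)) ∈ U := fun k => h
    have h7 := hfU _ hmem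
    rw [hrepr] at h7
    have h8 : ∑ k, (u / ∑ k', μ k') * μ k = u := by
      rw [← Finset.mul_sum, div_mul_cancel₀ _ hSpos.ne']
    linarith
  -- the normalized vector lies in the simplex
  have hlmem : (fun k => μ k / ∑ k', μ k') ∈ stdSimplex ℝ (Fin N) :=
    ⟨fun k => div_nonneg (hμnn k) hSpos.le, by rw [← Finset.sum_div, div_self hSpos.ne']⟩
  have hrle : r ≤ sInf {s | ∃ P ∈ Gamma N a b,
      s = ∑ i, (fun k => μ k / ∑ k', μ k') i * dot (P i) (C i)} := by
    apply le_csInf (hSlne _)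
    rintro s ⟨P, hP, rfl⟩
    have hy : (fun k => dot (P k) (C k)) ∈ K := ⟨P, hP, rfl⟩
    have h5 : u ≤ f (fun k => dot (P k) (C k)) := hfK _ hy
    rw [hrepr] at h5
    have heq : ∑ i, (μ i / ∑ k', μ k') * dot (P i) (C i)
        = (∑ k, dot (P k) (C k) * μ k) / (∑ k', μ k') := by
      rw [Finset.sum_div]
      exact Finset.sum_congr rfl fun i _ => by ring
    calc r ≤ u / ∑ k', μ k' := hru
      _ ≤ (∑ k, dot (P k) (C k) * μ k) / (∑ k', μ k') := (div_le_div_iff_of_pos_right hSpos).mpr h5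
      _ = ∑ i, (μ i / ∑ k', μ k') * dot (P i) (C i) := heq.symm
  have hfinal := le_csSup hSSbdd ⟨_, hlmem, rfl⟩
  linarith
end

section
/- In the discrete setting, for fixed λ ∈ Δ_N, the inner problem inf_{(P_i)∈Γ^N_{a,b}} Σ_i λ_i ⟨P_i, C_i⟩ equals the single-cost transport value W_{C_λ}(a,b) where C_λ is the matrix with entries min_i (λ_i (C_i)_{kl}). -/
open Finset

/- ## Auxiliary lemmas -/

lemma aux_min {N : ℕ} (hN : 0 < N) (f : Fin N → ℝ) :
    ∃ i0, (⨅ i, f i) = f i0 ∧ ∀ i, f i0 ≤ f i := by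
  haveI : Nonempty (Fin N) := ⟨⟨0, hN⟩⟩
  obtain ⟨i0, h⟩ := Finite.exists_min f
  exact ⟨i0, le_antisymm (ciInf_le (Finite.bddBelow_range f) i0) (le_ciInf h), h⟩

lemma aux_le_one {n : ℕ} {a : Fin n → ℝ} (ha : a ∈ stdSimplex ℝ (Fin n)) (i : Fin n) :
    a i ≤ 1 := by
  rw [← ha.2]
  exact Finset.single_le_sum (fun j _ => ha.1 j) (Finset.mem_univ i)

lemma aux_entry_le_one {n m : ℕ} {a : Fin n → ℝ} {b : Fin m → ℝ}
    {P : Matrix (Fin n) (Fin m) ℝ} (ha : a ∈ stdSimplex ℝ (Fin n))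
    (hP : IsCoupling a b P) (k : Fin n) (j : Fin m) : P k j ≤ 1 := by
  have h1 : P k j ≤ ∑ j', P k j' :=
    Finset.single_le_sum (fun j' _ => hP.1 k j') (Finset.mem_univ j)
  calc P k j ≤ a k := by rw [← hP.2.1 k]; exact h1
    _ ≤ 1 := aux_le_one ha k

/-- any coupling value is bounded below by `-∑ |D|`. -/
lemma aux_bdd {n m : ℕ} {a : Fin n → ℝ} {b : Fin m → ℝ}
    (ha : a ∈ stdSimplex ℝ (Fin n))
    {P : Matrix (Fin n) (Fin m) ℝ} (hP : IsCoupling a b P)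
    (D : Matrix (Fin n) (Fin m) ℝ) :
    -(∑ k, ∑ j, |D k j|) ≤ dot P D := by
  have : ∑ k, ∑ j, -|D k j| ≤ ∑ k, ∑ j, P k j * D k j := by
    refine Finset.sum_le_sum fun k _ => Finset.sum_le_sum fun j _ => ?_
    have h0 := hP.1 k j
    have h1 := aux_entry_le_one ha hP k j
    rcases abs_cases (D k j) with ⟨he, hd⟩ | ⟨he, hd⟩ <;> nlinarith
  simpa [dot, Finset.sum_neg_distrib] using this

/-- For fixed `λ∈Δ_N`, the inner problem `inf_{(P_i)∈Γ^N_{a,b}} ∑_i λᵢ⟨P_i,C_i⟩`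
equals `W_{C_λ}(a,b)` with `(C_λ)_{kl} = min_i λᵢ(C_i)_{kl}`. -/
theorem stmt_8 (N n m : ℕ) (hN : 0 < N) (a : Fin n → ℝ) (b : Fin m → ℝ)
    (ha : a ∈ stdSimplex ℝ (Fin n)) (hb : b ∈ stdSimplex ℝ (Fin m))
    (C : Fin N → Matrix (Fin n) (Fin m) ℝ)
    (l : Fin N → ℝ) (hl : l ∈ stdSimplex ℝ (Fin N)) :
    sInf {s | ∃ P ∈ Gamma N a b, s = ∑ i, l i * dot (P i) (C i)} =
      W a b (fun k j => ⨅ i, l i * C i k j) := by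
  haveI : Nonempty (Fin N) := ⟨⟨0, hN⟩⟩
  set Cl : Matrix (Fin n) (Fin m) ℝ := fun k j => ⨅ i, l i * C i k j with hCl
  set S : Set ℝ := {s | ∃ P ∈ Gamma N a b, s = ∑ i, l i * dot (P i) (C i)} with hS
  set T : Set ℝ := {t | ∃ P, IsCoupling a b P ∧ t = dot P Cl} with hT
  have hClle : ∀ i k j, Cl k j ≤ l i * C i k j := by
    intro i k j
    exact ciInf_le (Finite.bddBelow_range _) i
  -- chain: from a Gamma element, the summed matrix is a coupling with smaller Cl-cost
  have hchain : ∀ P ∈ Gamma N a b,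
      IsCoupling a b (fun k j => ∑ i, P i k j) ∧
      dot (fun k j => ∑ i, P i k j) Cl ≤ ∑ i, l i * dot (P i) (C i) := by
    intro P hP
    obtain ⟨hpos, hrow, hcol⟩ := hP
    constructor
    · refine ⟨fun k j => Finset.sum_nonneg fun i _ => hpos i k j, fun k => ?_, fun j => ?_⟩
      · rw [← hrow k, Finset.sum_comm]
      · rw [← hcol j, Finset.sum_comm]
    · have : ∀ k j, (∑ i, P i k j) * Cl k j ≤ ∑ i, P i k j * (l i * C i k j) := by
        intro k j
        rw [Finset.sum_mul]
        exact Finset.sum_le_sum fun i _ => mul_le_mul_of_nonneg_left (hClle i k j) (hpos i k j)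
      calc dot (fun k j => ∑ i, P i k j) Cl
          ≤ ∑ k, ∑ j, ∑ i, P i k j * (l i * C i k j) := by
            refine Finset.sum_le_sum fun k _ => Finset.sum_le_sum fun j _ => this k j
        _ = ∑ i, l i * dot (P i) (C i) := by
            have h2 : ∀ k : Fin n,
                (∑ j, ∑ i, P i k j * (l i * C i k j))
                  = ∑ i, ∑ j, P i k j * (l i * C i k j) := fun k => Finset.sum_comm
            rw [Finset.sum_congr rfl fun k _ => h2 k,
              show (∑ k, ∑ i, ∑ j, P i k j * (l i * C i k j))
                = ∑ i, ∑ k, ∑ j, P i k j * (l i * C i k j) from Finset.sum_comm]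
            refine Finset.sum_congr rfl fun i _ => ?_
            simp only [dot, Finset.mul_sum]
            exact Finset.sum_congr rfl fun k _ => Finset.sum_congr rfl fun j _ => by ring
  -- T ⊆ S : split any coupling along pointwise argmins
  have hsub : T ⊆ S := by
    rintro t ⟨P, hP, rfl⟩
    choose σ hσ hσmin using fun k j => aux_min hN (fun i => l i * C i k j)
    refine ⟨fun i k j => if i = σ k j then P k j else 0, ⟨?_, ?_, ?_⟩, ?_⟩
    · intro i k j
      dsimp only
      split <;> simp [hP.1 k j]
    · intro k
      rw [show (∑ i : Fin N, ∑ j, if i = σ k j then P k j else 0)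
          = ∑ j, ∑ i : Fin N, if i = σ k j then P k j else 0 from Finset.sum_comm]
      simp only [Finset.sum_ite_eq', Finset.mem_univ, if_true]
      exact hP.2.1 k
    · intro j
      rw [show (∑ i : Fin N, ∑ k, if i = σ k j then P k j else 0)
          = ∑ k, ∑ i : Fin N, if i = σ k j then P k j else 0 from Finset.sum_comm]
      simp only [Finset.sum_ite_eq', Finset.mem_univ, if_true]
      exact hP.2.2 j
    · have key : ∀ k j, (∑ i : Fin N, l i * ((if i = σ k j then P k j else 0) * C i k j))
          = P k j * Cl k j := by
        intro k j
        have h1 : ∀ i : Fin N, l i * ((if i = σ k j then P k j else 0) * C i k j)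
            = if i = σ k j then P k j * (l (σ k j) * C (σ k j) k j) else 0 := by
          intro i
          split
          · subst ‹i = σ k j›; ring
          · ring
        rw [Finset.sum_congr rfl fun i _ => h1 i, Finset.sum_ite_eq' Finset.univ (σ k j)]
        simp [hCl, hσ k j]
      show dot P Cl = ∑ i, l i * dot (fun k j => if i = σ k j then P k j else 0) (C i)
      calc dot P Cl
          = ∑ k, ∑ j, ∑ i : Fin N, l i * ((if i = σ k j then P k j else 0) * C i k j) := by
            simp only [dot]
            exact Finset.sum_congr rfl fun k _ => Finset.sum_congr rfl fun j _ => (key k j).symm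
        _ = ∑ i : Fin N, ∑ k, ∑ j, l i * ((if i = σ k j then P k j else 0) * C i k j) := by
            have h2 : ∀ k : Fin n,
                (∑ j, ∑ i : Fin N, l i * ((if i = σ k j then P k j else 0) * C i k j))
                  = ∑ i : Fin N, ∑ j, l i * ((if i = σ k j then P k j else 0) * C i k j) :=
              fun k => Finset.sum_comm
            rw [Finset.sum_congr rfl fun k _ => h2 k]
            exact Finset.sum_comm
        _ = ∑ i, l i * dot (fun k j => if i = σ k j then P k j else 0) (C i) := by
            simp [dot, Finset.mul_sum]
  -- the product coupling shows T is nonempty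
  have hprod : IsCoupling a b (fun k j => a k * b j) := by
    refine ⟨fun i j => mul_nonneg (ha.1 i) (hb.1 j), fun i => ?_, fun j => ?_⟩
    · rw [← Finset.mul_sum, hb.2, mul_one]
    · rw [← Finset.sum_mul, ha.2, one_mul]
  have hTne : T.Nonempty := ⟨_, _, hprod, rfl⟩
  have hSne : S.Nonempty := ⟨_, hsub hTne.choose_spec⟩
  -- bounds below
  have hTbdd : BddBelow T := by
    refine ⟨-(∑ k, ∑ j, |Cl k j|), ?_⟩
    rintro t ⟨P, hP, rfl⟩
    exact aux_bdd ha hP Cl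
  have hSbdd : BddBelow S := by
    refine ⟨-(∑ k, ∑ j, |Cl k j|), ?_⟩
    rintro s ⟨P, hP, rfl⟩
    obtain ⟨hcoup, hle⟩ := hchain P hP
    exact le_trans (aux_bdd ha hcoup Cl) hle
  refine le_antisymm (csInf_le_csInf hSbdd hTne hsub) ?_
  refine le_csInf hSne ?_
  rintro s ⟨P, hP, rfl⟩
  obtain ⟨hcoup, hle⟩ := hchain P hP
  exact csInf_le_of_le hTbdd ⟨_, hcoup, rfl⟩ hle
end

section
/- Strong duality for discrete EOT: EOT_C(a,b) = sup over λ ∈ Δ_N and (f,g) ∈ ℝ^n × ℝ^m satisfying f_k + g_l ≤ λ_i (C_i)_{kl} for all i,k,l, of ⟨f,a⟩ + ⟨g,b⟩. -/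
open Finset

/-!
Weak duality: for `P ∈ Γ` and a dual feasible `(λ, f, g)`, the marginal constraints give
`⟨f, a⟩ + ⟨g, b⟩ = ∑ (f k + g j) P i k j ≤ ∑ λ i ⟨P i, C i⟩ ≤ max_i ⟨P i, C i⟩`.

Strong duality: if `t < EOT_C(a, b)`, the image of the unit-mass decompositions `P` under
`P ↦ (row marginals, column marginals, (⟨P i, C i⟩)_i)` is a compact convex set missing
`{a} × {b} × {s | s ≤ t}`; restricting to unit mass is what makes it compact, so no closedness
of the primal cone is needed. A strictly separating functional `(f, g, -λ)` has `λ ≥ 0`, is dual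
feasible after shifting `f` by a constant, and has value `> t ∑ λ`. The product coupling rules
out `λ = 0`, so normalizing `λ` to the simplex gives a dual point of value `> t`.
-/

namespace Gamma

variable {N n m : ℕ} {a : Fin n → ℝ} {b : Fin m → ℝ} {P : Fin N → Matrix (Fin n) (Fin m) ℝ}

theorem sum_mul_add_sum_mul_eq (hP : P ∈ Gamma N a b) (f : Fin n → ℝ) (g : Fin m → ℝ) :
    ∑ k, f k * a k + ∑ j, g j * b j = ∑ i, ∑ k, ∑ j, (f k + g j) * P i k j := by
  obtain ⟨-, hrow, hcol⟩ := hP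
  simp only [← hrow, ← hcol, add_mul, sum_add_distrib, mul_sum]
  congr 1
  · rw [sum_comm]
  · rw [sum_comm]
    exact sum_congr rfl fun _ _ => sum_comm

theorem sum_mul_add_sum_mul_le (hP : P ∈ Gamma N a b) {f : Fin n → ℝ} {g : Fin m → ℝ}
    {c : Fin N → Matrix (Fin n) (Fin m) ℝ} (hfg : ∀ i k j, f k + g j ≤ c i k j) :
    ∑ k, f k * a k + ∑ j, g j * b j ≤ ∑ i, dot (P i) (c i) := by
  rw [sum_mul_add_sum_mul_eq hP]
  simp only [dot, mul_comm (P _ _ _)]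
  gcongr with i _ k _ j _
  exacts [hP.1 i k j, hfg i k j]

end Gamma

theorem pi_single_vecMulVec_mem_Gamma {N n m : ℕ} {a : Fin n → ℝ} {b : Fin m → ℝ}
    (ha : a ∈ stdSimplex ℝ (Fin n)) (hb : b ∈ stdSimplex ℝ (Fin m)) (i₀ : Fin N) :
    Pi.single i₀ (Matrix.vecMulVec a b) ∈ Gamma N a b := by
  refine ⟨fun i k j => ?_, fun k => ?_, fun j => ?_⟩
  · rcases eq_or_ne i i₀ with rfl | hi
    · simpa [Matrix.vecMulVec_apply] using mul_nonneg (ha.1 k) (hb.1 j)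
    · simp [hi]
  · rw [Fintype.sum_eq_single i₀ fun i hi => by simp [hi]]
    simp [Matrix.vecMulVec_apply, ← mul_sum, hb.2]
  · rw [Fintype.sum_eq_single i₀ fun i hi => by simp [hi]]
    simp [Matrix.vecMulVec_apply, ← sum_mul, ha.2]

theorem LinearMap.map_prod_pi_eq_sum {R M ι κ τ : Type*} [CommSemiring R] [AddCommMonoid M]
    [Module R M] [Fintype ι] [Fintype κ] [Fintype τ] [DecidableEq ι] [DecidableEq κ]
    [DecidableEq τ] (F : ((ι → R) × (κ → R) × (τ → R)) →ₗ[R] M) (x : ι → R) (y : κ → R)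
    (z : τ → R) :
    F (x, y, z) = ∑ k, x k • F (Pi.single k 1, 0, 0) + ∑ j, y j • F (0, Pi.single j 1, 0) +
      ∑ i, z i • F (0, 0, Pi.single i 1) := by
  have hxyz : (x, y, z) = ∑ k, x k • (Pi.single k 1, 0, 0) + ∑ j, y j • (0, Pi.single j 1, 0) +
      ∑ i, z i • ((0, 0, Pi.single i 1) : (ι → R) × (κ → R) × (τ → R)) := by
    ext <;> simp [Prod.fst_sum, Prod.snd_sum, Finset.sum_apply, Pi.single_apply]
  rw [hxyz, map_add, map_add, map_sum, map_sum, map_sum]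
  simp only [map_smul]

theorem nonneg_of_forall_lt_add_mul {w A x : ℝ} (h : ∀ c : ℝ, 0 ≤ c → w < A + c * x) :
    0 ≤ x := by
  by_contra! hx
  have hwA : w < A := by simpa using h 0 le_rfl
  have := h ((A - w) / -x) (div_nonneg (by linarith) (by linarith))
  have hc : (A - w) / -x * x = -(A - w) := by field_simp [hx.ne]
  linarith

section Separation

variable {N n m : ℕ}

/-- A weight `w` on triples `(i, k, j)` stands for the decomposition `P i k j = w (i, k, j)`. -/
noncomputable def marginalsAndCosts (C : Fin N → Matrix (Fin n) (Fin m) ℝ) :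
    (Fin N × Fin n × Fin m → ℝ) →ₗ[ℝ] (Fin n → ℝ) × (Fin m → ℝ) × (Fin N → ℝ) :=
  Fintype.linearCombination ℝ fun p =>
    (Pi.single p.2.1 1, Pi.single p.2.2 1, Pi.single p.1 (C p.1 p.2.1 p.2.2))

theorem marginalsAndCosts_apply (C : Fin N → Matrix (Fin n) (Fin m) ℝ)
    (w : Fin N × Fin n × Fin m → ℝ) :
    marginalsAndCosts C w = (fun k => ∑ i, ∑ j, w (i, k, j), fun j => ∑ i, ∑ k, w (i, k, j),
      fun i => dot (fun k j => w (i, k, j)) (C i)) := by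
  ext <;> simp [marginalsAndCosts, Fintype.linearCombination_apply, Fintype.sum_prod_type,
    Prod.fst_sum, Prod.snd_sum, Finset.sum_apply, Pi.single_apply, dot]

theorem marginalsAndCosts_single (C : Fin N → Matrix (Fin n) (Fin m) ℝ) (i : Fin N) (k : Fin n)
    (j : Fin m) :
    marginalsAndCosts C (Pi.single (i, k, j) 1) =
      (Pi.single k 1, Pi.single j 1, Pi.single i (C i k j)) := by
  simp [marginalsAndCosts, Fintype.linearCombination_apply_single]

theorem disjoint_marginalsAndCosts_image_stdSimplex (hN : 0 < N) {a : Fin n → ℝ}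
    {b : Fin m → ℝ} (C : Fin N → Matrix (Fin n) (Fin m) ℝ) {t : ℝ}
    (ht : ∀ P ∈ Gamma N a b, t < ⨆ i, dot (P i) (C i)) :
    Disjoint (marginalsAndCosts C '' stdSimplex ℝ _) ({a} ×ˢ {b} ×ˢ Set.Iic fun _ => t) := by
  have : Nonempty (Fin N) := Fin.pos_iff_nonempty.mp hN
  refine Set.disjoint_left.mpr ?_
  rintro _ ⟨w, hw, rfl⟩ ⟨hrow, hcol, hcost⟩
  simp only [marginalsAndCosts_apply, Set.mem_singleton_iff] at hrow hcol hcost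
  have hP : (fun i k j => w (i, k, j)) ∈ Gamma N a b :=
    ⟨fun i k j => hw.1 _, congrFun hrow, congrFun hcol⟩
  exact (ht _ hP).not_ge (ciSup_le hcost)

theorem exists_dual_nonneg_of_forall_lt_iSup (hN : 0 < N) {a : Fin n → ℝ} {b : Fin m → ℝ}
    (ha : ∑ k, a k = 1) (C : Fin N → Matrix (Fin n) (Fin m) ℝ) {t : ℝ}
    (ht : ∀ P ∈ Gamma N a b, t < ⨆ i, dot (P i) (C i)) :
    ∃ l : Fin N → ℝ, (∀ i, 0 ≤ l i) ∧ ∃ f : Fin n → ℝ, ∃ g : Fin m → ℝ,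
      (∀ i k j, f k + g j ≤ l i * C i k j) ∧
        t * ∑ i, l i < ∑ k, f k * a k + ∑ j, g j * b j := by
  obtain ⟨F, u, v, hFK, huv, hFH⟩ := geometric_hahn_banach_compact_closed
    ((convex_stdSimplex ℝ _).linear_image (marginalsAndCosts C))
    ((isCompact_stdSimplex ℝ _).image (marginalsAndCosts C).continuous_of_finiteDimensional)
    ((convex_singleton a).prod ((convex_singleton b).prod (convex_Iic _)))
    (isClosed_singleton.prod (isClosed_singleton.prod isClosed_Iic))
    (disjoint_marginalsAndCosts_image_stdSimplex hN C ht)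
  set f₀ : Fin n → ℝ := fun k => F (Pi.single k 1, 0, 0)
  set g : Fin m → ℝ := fun j => F (0, Pi.single j 1, 0)
  set μ : Fin N → ℝ := fun i => F (0, 0, Pi.single i 1)
  have hF : ∀ x y s, F (x, y, s) = ∑ k, x k * f₀ k + ∑ j, y j * g j + ∑ i, s i * μ i :=
    fun x y s => by simpa using F.toLinearMap.map_prod_pi_eq_sum x y s
  refine ⟨fun i => -μ i, fun i => ?_, fun k => f₀ k - u, g, fun i k j => ?_, ?_⟩
  · -- `v < F` on `{a} × {b} × {s | s ≤ t}`, which is unbounded below in each coordinate `s i`.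
    refine nonneg_of_forall_lt_add_mul (w := v)
      (A := ∑ k, a k * f₀ k + ∑ j, b j * g j + t * ∑ i, μ i) fun c hc => ?_
    have hs : (fun _ => t) - c • Pi.single i 1 ∈ Set.Iic fun _ : Fin N => t :=
      Set.mem_Iic.mpr (sub_le_self _ (smul_nonneg hc (Pi.single_nonneg.mpr zero_le_one)))
    have := hFH (a, b, _) ⟨rfl, rfl, hs⟩
    rw [hF] at this
    convert this using 1
    simp [sub_mul, sum_sub_distrib, Pi.single_apply, mul_sum]
    ring
  · have := hFK _ ⟨_, single_mem_stdSimplex ℝ _, marginalsAndCosts_single C i k j⟩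
    rw [hF] at this
    simp [Pi.single_apply] at this
    linarith
  · have := hFH (a, b, fun _ => t) ⟨rfl, rfl, Set.mem_Iic.mpr le_rfl⟩
    rw [hF] at this
    have hshift : ∑ k, (f₀ k - u) * a k = ∑ k, a k * f₀ k - u := by
      simp only [sub_mul, sum_sub_distrib, ← mul_sum, ha, mul_one, mul_comm (f₀ _)]
    simp only [hshift, sum_neg_distrib, mul_neg, ← mul_sum, mul_comm (g _)] at this ⊢
    linarith

end Separation

section Duality

variable {N n m : ℕ} {a : Fin n → ℝ} {b : Fin m → ℝ} {C : Fin N → Matrix (Fin n) (Fin m) ℝ}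

theorem sum_mul_add_sum_mul_le_iSup_dot {P : Fin N → Matrix (Fin n) (Fin m) ℝ}
    (hP : P ∈ Gamma N a b) {l : Fin N → ℝ} (hl : l ∈ stdSimplex ℝ (Fin N)) {f : Fin n → ℝ}
    {g : Fin m → ℝ} (hfg : ∀ i k j, f k + g j ≤ l i * C i k j) :
    ∑ k, f k * a k + ∑ j, g j * b j ≤ ⨆ i, dot (P i) (C i) :=
  calc ∑ k, f k * a k + ∑ j, g j * b j ≤ ∑ i, dot (P i) (l i • C i) :=
        Gamma.sum_mul_add_sum_mul_le hP hfg
    _ = ∑ i, l i * dot (P i) (C i) := by simp [dot, mul_sum, mul_left_comm]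
    _ ≤ ∑ i, l i * ⨆ i, dot (P i) (C i) := by
        gcongr with i
        · exact hl.1 i
        · exact le_ciSup (Finite.bddAbove_range fun i => dot (P i) (C i)) i
    _ = ⨆ i, dot (P i) (C i) := by rw [← sum_mul, hl.2, one_mul]

theorem exists_dual_feasible (hN : 0 < N) (C : Fin N → Matrix (Fin n) (Fin m) ℝ) :
    ∃ l ∈ stdSimplex ℝ (Fin N), ∃ f : Fin n → ℝ, ∃ g : Fin m → ℝ,
      ∀ i k j, f k + g j ≤ l i * C i k j := by
  obtain ⟨c, hc⟩ := Finite.bddBelow_range fun p : Fin N × Fin n × Fin m => C p.1 p.2.1 p.2.2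
  refine ⟨Pi.single ⟨0, hN⟩ 1, single_mem_stdSimplex ℝ _, fun _ => min c 0, 0, fun i k j => ?_⟩
  rcases eq_or_ne i ⟨0, hN⟩ with rfl | hi
  · simpa using Or.inl (hc ⟨(_, k, j), rfl⟩)
  · simp [hi]

theorem exists_dual_feasible_gt (hN : 0 < N) (ha : a ∈ stdSimplex ℝ (Fin n))
    (hb : b ∈ stdSimplex ℝ (Fin m)) {t : ℝ}
    (ht : ∀ P ∈ Gamma N a b, t < ⨆ i, dot (P i) (C i)) :
    ∃ l ∈ stdSimplex ℝ (Fin N), ∃ f : Fin n → ℝ, ∃ g : Fin m → ℝ,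
      (∀ i k j, f k + g j ≤ l i * C i k j) ∧ t < ∑ k, f k * a k + ∑ j, g j * b j := by
  obtain ⟨l, hl, f, g, hfg, hval⟩ := exists_dual_nonneg_of_forall_lt_iSup hN ha.2 C ht
  have hmass : 0 < ∑ i, l i := by
    refine (sum_nonneg fun i _ => hl i).lt_of_ne' fun h => ?_
    have hl0 : ∀ i, l i = 0 := fun i =>
      (sum_eq_zero_iff_of_nonneg fun i _ => hl i).mp h i (mem_univ i)
    have := Gamma.sum_mul_add_sum_mul_le (pi_single_vecMulVec_mem_Gamma ha hb ⟨0, hN⟩)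
      (c := 0) (f := f) (g := g) fun i k j => by simpa [hl0] using hfg i k j
    simp [dot, h] at this hval
    linarith
  refine ⟨fun i => l i / ∑ i, l i,
    ⟨fun i => div_nonneg (hl i) hmass.le, by rw [← sum_div, div_self hmass.ne']⟩,
    fun k => f k / ∑ i, l i, fun j => g j / ∑ i, l i, fun i k j => ?_, ?_⟩
  · rw [← add_div, div_mul_eq_mul_div]
    exact div_le_div_of_nonneg_right (hfg i k j) hmass.le
  · simp only [div_mul_eq_mul_div, ← sum_div, ← add_div]
    exact (lt_div_iff₀ hmass).mpr hval

end Duality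

/-- Strong duality for discrete EOT. -/
theorem stmt_10 (N n m : ℕ) (hN : 0 < N) (a : Fin n → ℝ) (b : Fin m → ℝ)
    (ha : a ∈ stdSimplex ℝ (Fin n)) (hb : b ∈ stdSimplex ℝ (Fin m))
    (C : Fin N → Matrix (Fin n) (Fin m) ℝ) :
    EOT a b C =
      sSup {t | ∃ l ∈ stdSimplex ℝ (Fin N), ∃ f : Fin n → ℝ, ∃ g : Fin m → ℝ,
        (∀ i k j, f k + g j ≤ l i * C i k j) ∧
        t = ∑ k, f k * a k + ∑ j, g j * b j} := by
  obtain ⟨l, hl, f, g, hfg⟩ := exists_dual_feasible hN C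
  have hbdd : BddBelow {t | ∃ P ∈ Gamma N a b, t = ⨆ i, dot (P i) (C i)} :=
    ⟨_, fun _ ⟨P, hP, hp⟩ => hp ▸ sum_mul_add_sum_mul_le_iSup_dot hP hl hfg⟩
  unfold EOT
  symm
  refine csSup_eq_of_forall_le_of_forall_lt_exists_gt ⟨_, l, hl, f, g, hfg, rfl⟩
    (fun _ ⟨l, hl, f, g, hfg, hd⟩ =>
      le_csInf ⟨_, _, pi_single_vecMulVec_mem_Gamma ha hb ⟨0, hN⟩, rfl⟩
        fun _ ⟨P, hP, hp⟩ => hd ▸ hp ▸ sum_mul_add_sum_mul_le_iSup_dot hP hl hfg)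
    fun t ht => ?_
  obtain ⟨l, hl, f, g, hfg, hval⟩ := exists_dual_feasible_gt hN ha hb fun P hP =>
    ht.trans_le (csInf_le hbdd ⟨P, hP, rfl⟩)
  exact ⟨_, ⟨l, hl, f, g, hfg, rfl⟩, hval⟩
end

section
/- For discrete measures on a finite metric space, the EOT problem with costs c_1 = 2·1_{x≠y} and c_2 = d equals the Dudley metric: EOT_{(c_1,c_2)}(μ,ν) = sup{ Σ_x f(x)(μ(x)-ν(x)) : ‖f‖_∞ + ‖f‖_Lip ≤ 1 }, where ‖f‖_Lip = max_{x≠y} |f(x)-f(y)|/d(x,y). -/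
/-!
Weak duality: for a plan `(γ₁, γ₂)` and an admissible `f`,
`∑ f (μ - ν) = ∑ (γ₁ + γ₂)(x, y) (f x - f y) ≤ α ∫ c₁ dγ₁ + β ∫ d dγ₂ ≤ (α + β) max (…)`.

Strong duality: if `v` lies below the cost of every plan, Hahn–Banach separates the points
`(μ, ν, s, t)`, `s, t ∈ [0, v]`, from the compact convex set of `(marginals, ∫ c₁ dγ₁, ∫ c₂ dγ₂)`
over plans of mass one. The separating functional yields `g, h` and `a, b > 0` with
`g x + h y ≤ min (a c₁ x y) (b d x y)` and `∑ μ g + ∑ ν h > v (a + b)`. As `min (a c₁) (b d)` is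
a truncated metric, `φ y = max_x (g x - min (a c₁ x y) (b d x y))` has oscillation at most `2a`
and is `b`-Lipschitz; centred and divided by `a + b` it is admissible, with value above `v`.
-/

open Finset

lemma csInf_eq_csSup_of_forall_exists_gt {P D : Set ℝ} (hP : P.Nonempty) (hD : D.Nonempty)
    (hweak : ∀ s ∈ D, ∀ t ∈ P, s ≤ t) (hstrong : ∀ v, (∀ t ∈ P, v < t) → ∃ s ∈ D, v < s) :
    sInf P = sSup D := by
  obtain ⟨s₀, hs₀⟩ := hD
  obtain ⟨t₀, ht₀⟩ := hP
  refine le_antisymm ?_ (csSup_le ⟨s₀, hs₀⟩ fun s hs => le_csInf ⟨t₀, ht₀⟩ (hweak s hs))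
  by_contra! hlt
  obtain ⟨s, hs, hvs⟩ := hstrong ((sSup D + sInf P) / 2) fun t ht =>
    (by linarith : (sSup D + sInf P) / 2 < sInf P).trans_le (csInf_le ⟨s₀, (hweak s₀ hs₀ ·)⟩ ht)
  have := le_csSup ⟨t₀, fun s hs => hweak s hs t₀ ht₀⟩ hs
  linarith

section

variable {X : Type*}

section DiscreteCost

variable [DecidableEq X]

def discreteCost (x y : X) : ℝ := if x = y then 0 else 2

lemma discreteCost_nonneg (x y : X) : 0 ≤ discreteCost x y := by
  unfold discreteCost; split_ifs <;> norm_num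

lemma discreteCost_le_two (x y : X) : discreteCost x y ≤ 2 := by
  unfold discreteCost; split_ifs <;> norm_num

lemma min_discreteCost_dist_triangle [PseudoMetricSpace X] {a b : ℝ} (ha : 0 ≤ a) (hb : 0 ≤ b)
    (x y z : X) :
    min (a * discreteCost x z) (b * dist x z) ≤
      min (a * discreteCost x y) (b * dist x y) + min (a * discreteCost y z) (b * dist y z) := by
  rcases eq_or_ne x y with rfl | hxy
  · simp [discreteCost]
  rcases eq_or_ne y z with rfl | hyz
  · simp [discreteCost]
  have hle_two : min (a * discreteCost x z) (b * dist x z) ≤ a * 2 :=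
    (min_le_left _ _).trans (mul_le_mul_of_nonneg_left (discreteCost_le_two x z) ha)
  have hle_dist : min (a * discreteCost x z) (b * dist x z) ≤ b * dist x y + b * dist y z :=
    (min_le_right _ _).trans ((mul_le_mul_of_nonneg_left (dist_triangle x y z) hb).trans_eq
      (mul_add _ _ _))
  have hxy₀ := mul_nonneg hb (dist_nonneg (x := x) (y := y))
  have hyz₀ := mul_nonneg hb (dist_nonneg (x := y) (y := z))
  rw [show discreteCost x y = 2 from if_neg hxy, show discreteCost y z = 2 from if_neg hyz]
  rcases min_cases (a * 2) (b * dist x y) with ⟨h₁, -⟩ | ⟨h₁, -⟩ <;>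
  rcases min_cases (a * 2) (b * dist y z) with ⟨h₂, -⟩ | ⟨h₂, -⟩ <;>
  linarith

end DiscreteCost

variable [Fintype X]

def eotValues (c₁ c₂ : X → X → ℝ) (μ ν : X → ℝ) : Set ℝ :=
  {t | ∃ γ₁ γ₂ : X → X → ℝ,
    (∀ x y, 0 ≤ γ₁ x y) ∧ (∀ x y, 0 ≤ γ₂ x y) ∧
    (∀ x, ∑ y, (γ₁ x y + γ₂ x y) = μ x) ∧
    (∀ y, ∑ x, (γ₁ x y + γ₂ x y) = ν y) ∧
    t = max (∑ x, ∑ y, γ₁ x y * c₁ x y) (∑ x, ∑ y, γ₂ x y * c₂ x y)}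

def dudleyValues [Dist X] (μ ν : X → ℝ) : Set ℝ :=
  {t | ∃ f : X → ℝ, ∃ α β : ℝ, α + β ≤ 1 ∧
    (∀ x, |f x| ≤ α) ∧ (∀ x y, |f x - f y| ≤ β * dist x y) ∧
    t = ∑ x, f x * (μ x - ν x)}

section Couplings

variable {μ ν : X → ℝ}

lemma sum_mul_sub_eq_sum_sum_mul_sub {γ : X → X → ℝ} (hrow : ∀ x, ∑ y, γ x y = μ x)
    (hcol : ∀ y, ∑ x, γ x y = ν y) (f : X → ℝ) :
    ∑ x, f x * (μ x - ν x) = ∑ x, ∑ y, γ x y * (f x - f y) := by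
  simp only [mul_sub, sum_sub_distrib, ← hrow, ← hcol, mul_sum]
  rw [sum_comm (f := fun x i => f x * γ i x)]
  simp only [mul_comm]

lemma sum_mul_add_sum_mul_le_of_add_le {g h : X → ℝ} {F : X → X → ℝ} (hμ0 : ∀ x, 0 ≤ μ x)
    (hμ1 : ∑ x, μ x = 1) (hν0 : ∀ y, 0 ≤ ν y) (hν1 : ∑ y, ν y = 1)
    (hF : ∀ x y, g x + h y ≤ F x y) :
    ∑ x, μ x * g x + ∑ y, ν y * h y ≤ ∑ x, ∑ y, μ x * ν y * F x y := by
  have hprod : ∑ x, μ x * g x + ∑ y, ν y * h y = ∑ x, ∑ y, μ x * ν y * (g x + h y) := by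
    simp only [mul_add, sum_add_distrib]
    congr 1
    · refine sum_congr rfl fun x _ => ?_
      rw [← sum_mul, ← mul_sum, hν1, mul_one]
    · rw [sum_comm]
      refine sum_congr rfl fun y _ => ?_
      rw [← sum_mul, ← sum_mul, hμ1, one_mul]
  rw [hprod]
  gcongr with x _ y _
  · exact mul_nonneg (hμ0 x) (hν0 y)
  · exact hF x y

lemma pos_of_add_le_mul {g h : X → ℝ} {c : X → X → ℝ} {a : ℝ} (hμ0 : ∀ x, 0 ≤ μ x)
    (hμ1 : ∑ x, μ x = 1) (hν0 : ∀ y, 0 ≤ ν y) (hν1 : ∑ y, ν y = 1) (hc : ∀ x y, 0 ≤ c x y)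
    (hgh : ∀ x y, g x + h y ≤ a * c x y) (hpos : 0 < ∑ x, μ x * g x + ∑ y, ν y * h y) :
    0 < a := by
  by_contra! ha
  have hle := sum_mul_add_sum_mul_le_of_add_le hμ0 hμ1 hν0 hν1 hgh
  have hnonpos : ∑ x, ∑ y, μ x * ν y * (a * c x y) ≤ 0 :=
    sum_nonpos fun x _ => sum_nonpos fun y _ =>
      mul_nonpos_of_nonneg_of_nonpos (mul_nonneg (hμ0 x) (hν0 y))
        (mul_nonpos_of_nonpos_of_nonneg ha (hc x y))
  linarith

lemma eotValues_nonempty (c₁ c₂ : X → X → ℝ) (hμ0 : ∀ x, 0 ≤ μ x) (hμ1 : ∑ x, μ x = 1)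
    (hν0 : ∀ y, 0 ≤ ν y) (hν1 : ∑ y, ν y = 1) : (eotValues c₁ c₂ μ ν).Nonempty :=
  ⟨_, fun x y => μ x * ν y, fun _ _ => 0, fun x y => mul_nonneg (hμ0 x) (hν0 y),
    fun _ _ => le_rfl, fun x => by simp [← mul_sum, hν1],
    fun y => by simp [← sum_mul, hμ1], rfl⟩

lemma sum_mul_add_sum_mul_le_sum_mul_sub {g h φ : X → ℝ} (hμ0 : ∀ x, 0 ≤ μ x)
    (hν0 : ∀ y, 0 ≤ ν y) (hgφ : ∀ x, g x ≤ φ x) (hφh : ∀ y, φ y ≤ -h y) :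
    ∑ x, μ x * g x + ∑ y, ν y * h y ≤ ∑ x, φ x * (μ x - ν x) :=
  calc ∑ x, μ x * g x + ∑ y, ν y * h y ≤ ∑ x, μ x * φ x + ∑ y, ν y * -φ y :=
        add_le_add (sum_le_sum fun x _ => mul_le_mul_of_nonneg_left (hgφ x) (hμ0 x))
          (sum_le_sum fun y _ => mul_le_mul_of_nonneg_left (by linarith [hφh y]) (hν0 y))
    _ = ∑ x, φ x * (μ x - ν x) := by
        rw [← sum_add_distrib]; exact sum_congr rfl fun x _ => by ring

end Couplings

section Separation

variable [DecidableEq X]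

/-- Marginals and costs of a unit mass at `(x, y)`, put into `γ₁` if `b` and into `γ₂` otherwise. -/
def planVertex (c₁ c₂ : X → X → ℝ) : Bool × X × X → (X → ℝ) × (X → ℝ) × ℝ × ℝ
  | (b, x, y) => (Pi.single x 1, Pi.single y 1, cond b (c₁ x y) 0, cond b 0 (c₂ x y))

lemma linearCombination_planVertex (c₁ c₂ : X → X → ℝ) (w : Bool × X × X → ℝ) :
    Fintype.linearCombination ℝ (planVertex c₁ c₂) w =
      (fun x => ∑ y, (w (true, x, y) + w (false, x, y)),
       fun y => ∑ x, (w (true, x, y) + w (false, x, y)),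
       ∑ x, ∑ y, w (true, x, y) * c₁ x y, ∑ x, ∑ y, w (false, x, y) * c₂ x y) := by
  simp only [Fintype.linearCombination_apply, Fintype.sum_prod_type, Fintype.sum_bool]
  ext
  · simp [planVertex, Prod.fst_sum, Finset.sum_apply, Pi.single_apply, sum_add_distrib]
  · simp [planVertex, Prod.snd_sum, Prod.fst_sum, Finset.sum_apply, Pi.single_apply,
      sum_add_distrib]
  · simp [planVertex, Prod.snd_sum, Prod.fst_sum]
  · simp [planVertex, Prod.snd_sum]

lemma LinearMap.apply_eq_sum_mul_apply_single (z : ((X → ℝ) × (X → ℝ) × ℝ × ℝ) →ₗ[ℝ] ℝ)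
    (p q : X → ℝ) (a b : ℝ) :
    z (p, q, a, b) = ∑ x, p x * z (Pi.single x 1, 0, 0, 0) +
      ∑ y, q y * z (0, Pi.single y 1, 0, 0) + a * z (0, 0, 1, 0) + b * z (0, 0, 0, 1) := by
  have hdecomp : ((p, q, a, b) : (X → ℝ) × (X → ℝ) × ℝ × ℝ) =
      ∑ x, p x • ((Pi.single x 1, 0, 0, 0) : (X → ℝ) × (X → ℝ) × ℝ × ℝ) +
      ∑ y, q y • ((0, Pi.single y 1, 0, 0) : (X → ℝ) × (X → ℝ) × ℝ × ℝ) +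
      a • (0, 0, 1, 0) + b • (0, 0, 0, 1) := by
    ext <;> simp [Prod.fst_sum, Prod.snd_sum, Finset.sum_apply, Pi.single_apply]
  rw [hdecomp]
  simp only [map_add, map_sum, map_smul, smul_eq_mul]

lemma disjoint_planVertex_hull_targets {c₁ c₂ : X → X → ℝ} {μ ν : X → ℝ} {v : ℝ}
    (hv : ∀ t ∈ eotValues c₁ c₂ μ ν, v < t) :
    Disjoint (Fintype.linearCombination ℝ (planVertex c₁ c₂) '' stdSimplex ℝ (Bool × X × X))
      ({μ} ×ˢ {ν} ×ˢ Set.Icc 0 v ×ˢ Set.Icc 0 v) := by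
  rw [Set.disjoint_left]
  rintro _ ⟨w, ⟨hw0, -⟩, rfl⟩ hT
  simp only [linearCombination_planVertex, Set.mem_prod, Set.mem_singleton_iff,
    Set.mem_Icc] at hT
  obtain ⟨hrow, hcol, ⟨-, hA⟩, -, hB⟩ := hT
  exact (hv _ ⟨fun x y => w (true, x, y), fun x y => w (false, x, y), fun _ _ => hw0 _,
    fun _ _ => hw0 _, congrFun hrow, congrFun hcol, rfl⟩).not_ge (max_le hA hB)

end Separation

lemma exists_separating_potentials {c₁ c₂ : X → X → ℝ} {μ ν : X → ℝ} (hμ1 : ∑ x, μ x = 1)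
    {v : ℝ} (hv : ∀ t ∈ eotValues c₁ c₂ μ ν, v < t) :
    ∃ (g h : X → ℝ) (a b : ℝ), (∀ x y, g x + h y ≤ a * c₁ x y) ∧
      (∀ x y, g x + h y ≤ b * c₂ x y) ∧
      ∀ s ∈ Set.Icc 0 v, ∀ t ∈ Set.Icc 0 v, s * a + t * b < ∑ x, μ x * g x + ∑ y, ν y * h y := by
  classical
  obtain ⟨z, u, u', hz_plans, huu', hz_targets⟩ := geometric_hahn_banach_compact_closed
    ((convex_stdSimplex ℝ _).linear_image _)
    ((isCompact_stdSimplex ℝ _).image (LinearMap.continuous_of_finiteDimensional _))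
    ((convex_singleton μ).prod <| (convex_singleton ν).prod <|
      (convex_Icc 0 v).prod (convex_Icc 0 v))
    (isCompact_singleton.prod <| isCompact_singleton.prod <|
      isCompact_Icc.prod isCompact_Icc).isClosed
    (disjoint_planVertex_hull_targets hv)
  have hz := (z : ((X → ℝ) × (X → ℝ) × ℝ × ℝ) →ₗ[ℝ] ℝ).apply_eq_sum_mul_apply_single
  simp only [ContinuousLinearMap.coe_coe] at hz
  have hvertex : ∀ i, z (planVertex c₁ c₂ i) < u := fun i =>
    hz_plans _ ⟨Pi.single i 1, single_mem_stdSimplex ℝ i, by simp⟩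
  -- `u` is absorbed into `g`, as every vertex and `μ` have unit mass
  refine ⟨fun x => z (Pi.single x 1, 0, 0, 0) - u, fun y => z (0, Pi.single y 1, 0, 0),
    -z (0, 0, 1, 0), -z (0, 0, 0, 1), fun x y => ?_, fun x y => ?_, fun s hs t ht => ?_⟩
  · have := hvertex (true, x, y)
    rw [planVertex, hz] at this
    simp only [Pi.single_apply, ite_mul, one_mul, zero_mul, sum_ite_eq', mem_univ, ↓reduceIte,
      cond_true, add_zero] at this
    linarith
  · have := hvertex (false, x, y)
    rw [planVertex, hz] at this
    simp only [Pi.single_apply, ite_mul, one_mul, zero_mul, sum_ite_eq', mem_univ, ↓reduceIte,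
      cond_false, add_zero] at this
    linarith
  · have := hz_targets (μ, ν, s, t) ⟨rfl, rfl, hs, ht⟩
    rw [hz] at this
    simp only [mul_sub, sum_sub_distrib, ← sum_mul, hμ1]
    linarith

theorem exists_dual_certificate {c₁ c₂ : X → X → ℝ} (hc₁ : ∀ x y, 0 ≤ c₁ x y)
    (hc₂ : ∀ x y, 0 ≤ c₂ x y) {μ ν : X → ℝ} (hμ0 : ∀ x, 0 ≤ μ x) (hμ1 : ∑ x, μ x = 1)
    (hν0 : ∀ y, 0 ≤ ν y) (hν1 : ∑ y, ν y = 1) {v : ℝ} (hv0 : 0 ≤ v)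
    (hv : ∀ t ∈ eotValues c₁ c₂ μ ν, v < t) :
    ∃ (g h : X → ℝ) (a b : ℝ), 0 < a ∧ 0 < b ∧ (∀ x y, g x + h y ≤ a * c₁ x y) ∧
      (∀ x y, g x + h y ≤ b * c₂ x y) ∧ v * (a + b) < ∑ x, μ x * g x + ∑ y, ν y * h y := by
  obtain ⟨g, h, a, b, hgh₁, hgh₂, htarget⟩ := exists_separating_potentials hμ1 hv
  have hpos : 0 < ∑ x, μ x * g x + ∑ y, ν y * h y := by
    simpa using htarget 0 ⟨le_rfl, hv0⟩ 0 ⟨le_rfl, hv0⟩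
  refine ⟨g, h, a, b, pos_of_add_le_mul hμ0 hμ1 hν0 hν1 hc₁ hgh₁ hpos,
    pos_of_add_le_mul hμ0 hμ1 hν0 hν1 hc₂ hgh₂ hpos, hgh₁, hgh₂, ?_⟩
  linarith [htarget v ⟨hv0, le_rfl⟩ v ⟨hv0, le_rfl⟩]

section Potentials

variable [Nonempty X]

lemma exists_potential {m : X → X → ℝ} (hm_self : ∀ x, m x x = 0)
    (hm_triangle : ∀ x y z, m x z ≤ m x y + m y z) {g h : X → ℝ}
    (hgh : ∀ x y, g x + h y ≤ m x y) :
    ∃ φ : X → ℝ, (∀ x, g x ≤ φ x) ∧ (∀ y, φ y ≤ -h y) ∧ ∀ y y', φ y ≤ φ y' + m y y' := by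
  refine ⟨fun y => univ.sup' univ_nonempty fun x => g x - m x y, fun x => ?_, fun y => ?_,
    fun y y' => ?_⟩
  · exact le_sup'_of_le _ (mem_univ x) (by rw [hm_self, sub_zero])
  · exact sup'_le _ _ fun x _ => by linarith [hgh x y]
  · dsimp only
    refine sup'_le _ _ fun x _ => ?_
    calc g x - m x y ≤ (g x - m x y') + m y y' := by linarith [hm_triangle x y y']
      _ ≤ _ := add_le_add_left (le_sup' (fun x => g x - m x y') (mem_univ x)) _

lemma exists_abs_sub_le_of_le_add {φ : X → ℝ} {a : ℝ} (hφ : ∀ y y', φ y ≤ φ y' + 2 * a) :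
    ∃ c, ∀ y, |φ y - c| ≤ a := by
  obtain ⟨y₀, -, hy₀⟩ := exists_mem_eq_sup' univ_nonempty φ
  refine ⟨φ y₀ - a, fun y => abs_le.2 ⟨by linarith [hφ y₀ y], ?_⟩⟩
  linarith [hy₀ ▸ le_sup' φ (mem_univ y)]

end Potentials

section Dudley

variable [PseudoMetricSpace X] {μ ν : X → ℝ}

lemma zero_mem_dudleyValues : (0 : ℝ) ∈ dudleyValues μ ν :=
  ⟨0, 0, 0, by norm_num, by simp, by simp, by simp⟩

variable [DecidableEq X]

lemma le_of_mem_dudleyValues_of_mem_eotValues [Nonempty X] {s t : ℝ}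
    (hs : s ∈ dudleyValues μ ν) (ht : t ∈ eotValues discreteCost dist μ ν) : s ≤ t := by
  obtain ⟨f, α, β, hαβ, hfα, hfβ, rfl⟩ := hs
  obtain ⟨γ₁, γ₂, hγ₁, hγ₂, hrow, hcol, rfl⟩ := ht
  set A := ∑ x, ∑ y, γ₁ x y * discreteCost x y
  set B := ∑ x, ∑ y, γ₂ x y * dist x y
  have hA : 0 ≤ A := sum_nonneg fun x _ => sum_nonneg fun y _ =>
    mul_nonneg (hγ₁ x y) (discreteCost_nonneg x y)
  have hB : 0 ≤ B := sum_nonneg fun x _ => sum_nonneg fun y _ =>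
    mul_nonneg (hγ₂ x y) dist_nonneg
  rw [sum_mul_sub_eq_sum_sum_mul_sub (γ := fun x y => γ₁ x y + γ₂ x y) hrow hcol]
  rcases lt_or_ge β 0 with hβ | hβ
  · have hconst : ∀ x y, f x - f y = 0 := fun x y => abs_nonpos_iff.1
      ((hfβ x y).trans (mul_nonpos_of_nonpos_of_nonneg hβ.le dist_nonneg))
    simp only [hconst, mul_zero, sum_const_zero]
    exact hA.trans (le_max_left _ _)
  have hα : 0 ≤ α := (abs_nonneg _).trans (hfα (Classical.arbitrary X))
  have hdisc : ∀ x y, f x - f y ≤ α * discreteCost x y := fun x y => by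
    unfold discreteCost
    split_ifs with hxy
    · simp [hxy]
    · linarith [le_abs_self (f x), neg_abs_le (f y), hfα x, hfα y]
  calc ∑ x, ∑ y, (γ₁ x y + γ₂ x y) * (f x - f y)
      ≤ ∑ x, ∑ y, (γ₁ x y * (α * discreteCost x y) + γ₂ x y * (β * dist x y)) := by
        gcongr with x _ y _
        rw [add_mul]
        exact add_le_add (mul_le_mul_of_nonneg_left (hdisc x y) (hγ₁ x y))
          (mul_le_mul_of_nonneg_left ((le_abs_self _).trans (hfβ x y)) (hγ₂ x y))
    _ = α * A + β * B := by
        simp only [A, B, sum_add_distrib, mul_sum]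
        congr 1 <;> exact sum_congr rfl fun x _ => sum_congr rfl fun y _ => by ring
    _ ≤ max A B := by nlinarith [le_max_left A B, le_max_right A B]

lemma exists_mem_dudleyValues_ge [Nonempty X] (hμ0 : ∀ x, 0 ≤ μ x) (hμ1 : ∑ x, μ x = 1)
    (hν0 : ∀ y, 0 ≤ ν y) (hν1 : ∑ y, ν y = 1) {g h : X → ℝ} {a b : ℝ} (ha : 0 < a) (hb : 0 < b)
    (h₁ : ∀ x y, g x + h y ≤ a * discreteCost x y) (h₂ : ∀ x y, g x + h y ≤ b * dist x y) :
    ∃ s ∈ dudleyValues μ ν, (∑ x, μ x * g x + ∑ y, ν y * h y) / (a + b) ≤ s := by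
  obtain ⟨φ, hgφ, hφh, hφ⟩ :=
    exists_potential (m := fun x y => min (a * discreteCost x y) (b * dist x y))
      (fun x => by simp [discreteCost]) (min_discreteCost_dist_triangle ha.le hb.le)
      (fun x y => le_min (h₁ x y) (h₂ x y))
  have hosc : ∀ y y', φ y ≤ φ y' + 2 * a := fun y y' => by
    have := mul_le_mul_of_nonneg_left (discreteCost_le_two y y') ha.le
    linarith [hφ y y', min_le_left (a * discreteCost y y') (b * dist y y')]
  have hlip : ∀ y y', |φ y - φ y'| ≤ b * dist y y' := fun y y' => by
    rw [abs_sub_le_iff]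
    constructor
    · linarith [hφ y y', min_le_right (a * discreteCost y y') (b * dist y y')]
    · rw [dist_comm]
      linarith [hφ y' y, min_le_right (a * discreteCost y' y) (b * dist y' y)]
  obtain ⟨c, hc⟩ := exists_abs_sub_le_of_le_add hosc
  have hab := add_pos ha hb
  refine ⟨_, ⟨fun x => (φ x - c) / (a + b), a / (a + b), b / (a + b),
    by rw [← add_div, div_self hab.ne'], fun x => ?_, fun x y => ?_, rfl⟩, ?_⟩
  · rw [abs_div, abs_of_pos hab]
    exact div_le_div_of_nonneg_right (hc x) hab.le
  · rw [← sub_div, abs_div, abs_of_pos hab, div_mul_eq_mul_div, sub_sub_sub_cancel_right]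
    exact div_le_div_of_nonneg_right (hlip x y) hab.le
  · have hzero : ∑ x, (μ x - ν x) = 0 := by rw [sum_sub_distrib, hμ1, hν1, sub_self]
    have hcentre :
        ∑ x, (φ x - c) / (a + b) * (μ x - ν x) = (∑ x, φ x * (μ x - ν x)) / (a + b) := by
      simp only [sub_div, sub_mul, sum_sub_distrib, ← mul_sum, hzero]
      rw [mul_zero, sub_zero, sum_div]
      exact sum_congr rfl fun x _ => div_mul_eq_mul_div _ _ _
    rw [hcentre]
    exact div_le_div_of_nonneg_right
      (sum_mul_add_sum_mul_le_sum_mul_sub hμ0 hν0 hgφ hφh) hab.le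

lemma exists_mem_dudleyValues_gt [Nonempty X] (hμ0 : ∀ x, 0 ≤ μ x) (hμ1 : ∑ x, μ x = 1)
    (hν0 : ∀ y, 0 ≤ ν y) (hν1 : ∑ y, ν y = 1) {v : ℝ}
    (hv : ∀ t ∈ eotValues discreteCost dist μ ν, v < t) : ∃ s ∈ dudleyValues μ ν, v < s := by
  rcases lt_or_ge v 0 with hv0 | hv0
  · exact ⟨0, zero_mem_dudleyValues, hv0⟩
  obtain ⟨g, h, a, b, ha, hb, h₁, h₂, hval⟩ := exists_dual_certificate discreteCost_nonneg
    (fun _ _ => dist_nonneg) hμ0 hμ1 hν0 hν1 hv0 hv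
  obtain ⟨s, hs, hle⟩ := exists_mem_dudleyValues_ge hμ0 hμ1 hν0 hν1 ha hb h₁ h₂
  exact ⟨s, hs, ((lt_div_iff₀ (add_pos ha hb)).2 hval).trans_le hle⟩

end Dudley

end

/-- On a finite metric space, EOT with costs `c₁ = 2·1_{x≠y}` and `c₂ = d`
equals the Dudley metric. -/
theorem stmt_16 (X : Type*) [Fintype X] [Nonempty X] [MetricSpace X] [DecidableEq X]
    (μ ν : X → ℝ) (hμ0 : ∀ x, 0 ≤ μ x) (hμ1 : ∑ x, μ x = 1)
    (hν0 : ∀ x, 0 ≤ ν x) (hν1 : ∑ x, ν x = 1) :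
    sInf {t : ℝ | ∃ γ₁ γ₂ : X → X → ℝ,
        (∀ x y, 0 ≤ γ₁ x y) ∧ (∀ x y, 0 ≤ γ₂ x y) ∧
        (∀ x, ∑ y, (γ₁ x y + γ₂ x y) = μ x) ∧
        (∀ y, ∑ x, (γ₁ x y + γ₂ x y) = ν y) ∧
        t = max (∑ x, ∑ y, γ₁ x y * (if x = y then 0 else 2))
                (∑ x, ∑ y, γ₂ x y * dist x y)} =
    sSup {t : ℝ | ∃ f : X → ℝ, ∃ α β : ℝ, α + β ≤ 1 ∧
        (∀ x, |f x| ≤ α) ∧ (∀ x y, |f x - f y| ≤ β * dist x y) ∧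
        t = ∑ x, f x * (μ x - ν x)} :=
  csInf_eq_csSup_of_forall_exists_gt (eotValues_nonempty _ _ hμ0 hμ1 hν0 hν1)
    ⟨0, zero_mem_dudleyValues⟩ (fun _ hs _ ht => le_of_mem_dudleyValues_of_mem_eotValues hs ht)
    (fun _ hv => exists_mem_dudleyValues_gt hμ0 hμ1 hν0 hν1 hv)
end

section
/- If f : X → ℝ satisfies f(x) - f(y) ≤ min(2λ, (1-λ)d(x,y)) for all x,y (i.e. f is 1-Lipschitz w.r.t. c_λ) on a finite metric space, then g := f - inf f - λ satisfies ‖g‖_∞ ≤ λ and ‖g‖_Lip ≤ 1-λ, and conversely if ‖g‖_∞ + ‖g‖_Lip ≤ 1 then f := g + ‖g‖_∞ is 1-Lipschitz w.r.t. c_{‖g‖_∞}; in both directions ∫f dμ - ∫f dν = ∫g dμ - ∫g dν for probability measures μ, ν. -/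
open Finset

/-- On a finite metric space, `f` 1-Lipschitz w.r.t. `c_λ = min(2λ,(1-λ)d)` yields
`g := f - inf f - λ` with `‖g‖_∞ ≤ λ` and `‖g‖_Lip ≤ 1-λ`; conversely if
`‖g‖_∞ + ‖g‖_Lip ≤ 1` then `f := g + ‖g‖_∞` is 1-Lipschitz w.r.t. `c_{‖g‖_∞}`;
in both directions the integrals against `μ - ν` agree. -/
theorem stmt_17 (X : Type*) [Fintype X] [Nonempty X] [MetricSpace X]
    (l : ℝ) (hl0 : 0 ≤ l) (hl1 : l < 1)
    (μ ν : X → ℝ) (hμ0 : ∀ x, 0 ≤ μ x) (hμ1 : ∑ x, μ x = 1)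
    (hν0 : ∀ x, 0 ≤ ν x) (hν1 : ∑ x, ν x = 1) :
    (∀ f : X → ℝ,
      (∀ x y, f x - f y ≤ min (2 * l) ((1 - l) * dist x y)) →
      (∀ x, |f x - (⨅ z, f z) - l| ≤ l) ∧
      (∀ x y, |(f x - (⨅ z, f z) - l) - (f y - (⨅ z, f z) - l)| ≤ (1 - l) * dist x y) ∧
      ∑ x, f x * (μ x - ν x) = ∑ x, (f x - (⨅ z, f z) - l) * (μ x - ν x)) ∧
    (∀ g : X → ℝ, ∀ β : ℝ,
      (⨆ x, |g x|) + β ≤ 1 → (∀ x y, |g x - g y| ≤ β * dist x y) →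
      (∀ x y, (g x + ⨆ z, |g z|) - (g y + ⨆ z, |g z|) ≤
        min (2 * ⨆ z, |g z|) ((1 - ⨆ z, |g z|) * dist x y)) ∧
      ∑ x, (g x + ⨆ z, |g z|) * (μ x - ν x) = ∑ x, g x * (μ x - ν x)) := by
  have hsum : ∀ C : ℝ, ∑ x, (C : ℝ) * (μ x - ν x) = 0 := by
    intro C
    rw [← Finset.mul_sum]
    simp [Finset.sum_sub_distrib, hμ1, hν1]
  constructor
  · intro f hf
    have hbdd : BddBelow (Set.range f) := (Set.finite_range f).bddBelow
    have hinf_le : ∀ y, (⨅ z, f z) ≤ f y := fun y => ciInf_le hbdd y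
    have hle_inf : ∀ x, f x - 2 * l ≤ ⨅ z, f z := by
      intro x
      apply le_ciInf
      intro z
      have := (hf x z).trans (min_le_left _ _)
      linarith
    refine ⟨?_, ?_, ?_⟩
    · intro x
      rw [abs_le]
      constructor
      · have := hinf_le x; linarith
      · have := hle_inf x; linarith
    · intro x y
      have h1 := (hf x y).trans (min_le_right _ _)
      have h2 := (hf y x).trans (min_le_right _ _)
      rw [dist_comm y x] at h2
      rw [abs_le]
      constructor <;> [skip; skip] <;> linarith
    · have : ∀ x, (f x - (⨅ z, f z) - l) * (μ x - ν x)
          = f x * (μ x - ν x) - ((⨅ z, f z) + l) * (μ x - ν x) := by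
        intro x; ring
      simp_rw [this, Finset.sum_sub_distrib, hsum ((⨅ z, f z) + l), sub_zero]
  · intro g β hβ hLip
    have hbdd : BddAbove (Set.range fun z => |g z|) := (Set.finite_range _).bddAbove
    have hle_sup : ∀ x, |g x| ≤ ⨆ z, |g z| := fun x => le_ciSup hbdd x
    constructor
    · intro x y
      have h1 : g x - g y ≤ 2 * ⨆ z, |g z| := by
        have hx := (abs_le.1 (le_refl |g x|)).2.trans (hle_sup x)
        have hy := neg_abs_le (g y)
        have := hle_sup y
        calc g x - g y ≤ |g x| + |g y| := by
              have := le_abs_self (g x); have := neg_abs_le (g y); linarith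
          _ ≤ 2 * ⨆ z, |g z| := by linarith [hle_sup x, hle_sup y]
      have h2 : g x - g y ≤ (1 - ⨆ z, |g z|) * dist x y := by
        have := (le_abs_self (g x - g y)).trans (hLip x y)
        have hβ' : β ≤ 1 - ⨆ z, |g z| := by linarith
        have := mul_le_mul_of_nonneg_right hβ' (dist_nonneg (x := x) (y := y))
        linarith
      have : (g x + ⨆ z, |g z|) - (g y + ⨆ z, |g z|) = g x - g y := by ring
      rw [this, le_min_iff]
      exact ⟨h1, h2⟩
    · have : ∀ x, (g x + ⨆ z, |g z|) * (μ x - ν x)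
          = g x * (μ x - ν x) + (⨆ z, |g z|) * (μ x - ν x) := by
        intro x; ring
      simp_rw [this, Finset.sum_add_distrib, hsum (⨆ z, |g z|), add_zero]
end

section
/- The Dudley metric is bounded by the harmonic mean of total variation and Wasserstein: for probability measures μ, ν on a finite metric space, β_d(μ,ν) ≤ TV(μ,ν)·W_d(μ,ν) / (TV(μ,ν) + W_d(μ,ν)), provided TV(μ,ν) > 0 and W_d(μ,ν) > 0. -/
open Finset

/-- The Dudley metric on a finite metric space. -/
noncomputable def dudley (X : Type*) [Fintype X] [MetricSpace X] (μ ν : X → ℝ) : ℝ :=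
  sSup {t : ℝ | ∃ f : X → ℝ, ∃ α β : ℝ, α + β ≤ 1 ∧
      (∀ x, |f x| ≤ α) ∧ (∀ x y, |f x - f y| ≤ β * dist x y) ∧
      t = ∑ x, f x * (μ x - ν x)}

/-- The total variation distance (IPM form) on a finite space. -/
noncomputable def tv (X : Type*) [Fintype X] (μ ν : X → ℝ) : ℝ :=
  sSup {t : ℝ | ∃ f : X → ℝ, (∀ x, |f x| ≤ 1) ∧ t = ∑ x, f x * (μ x - ν x)}

/-- The Wasserstein distance on a finite metric space. -/
noncomputable def wass (X : Type*) [Fintype X] [MetricSpace X] (μ ν : X → ℝ) : ℝ :=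
  sInf {t : ℝ | ∃ γ : X → X → ℝ, (∀ x y, 0 ≤ γ x y) ∧
      (∀ x, ∑ y, γ x y = μ x) ∧ (∀ y, ∑ x, γ x y = ν y) ∧
      t = ∑ x, ∑ y, γ x y * dist x y}

/-- Dudley is bounded by the harmonic mean of TV and Wasserstein. -/
theorem stmt_18 (X : Type*) [Fintype X] [Nonempty X] [MetricSpace X]
    (μ ν : X → ℝ) (hμ0 : ∀ x, 0 ≤ μ x) (hμ1 : ∑ x, μ x = 1)
    (hν0 : ∀ x, 0 ≤ ν x) (hν1 : ∑ x, ν x = 1)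
    (hTV : 0 < tv X μ ν) (hW : 0 < wass X μ ν) :
    dudley X μ ν ≤ tv X μ ν * wass X μ ν / (tv X μ ν + wass X μ ν) := by
  set T := tv X μ ν with hTdef
  set W := wass X μ ν with hWdef
  have hRHS : 0 ≤ T * W / (T + W) := by positivity
  rw [dudley]
  apply Real.sSup_le _ hRHS
  rintro t ⟨f, α, β, hαβ, hfα, hfβ, rfl⟩
  set s := ∑ x, f x * (μ x - ν x) with hs
  rcases le_or_gt s 0 with h | hspos
  · exact h.trans hRHS
  have hα0 : 0 < α := by
    by_contra hc
    push_neg at hc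
    have hz : ∀ x, f x = 0 := fun x => abs_nonpos_iff.mp ((hfα x).trans hc)
    have : s = 0 := by simp [hs, hz]
    linarith
  have hβ0 : 0 < β := by
    by_contra hc
    push_neg at hc
    obtain ⟨x0⟩ := ‹Nonempty X›
    have hconst : ∀ x, f x = f x0 := by
      intro x
      have h1 : |f x - f x0| ≤ 0 :=
        (hfβ x x0).trans (mul_nonpos_of_nonpos_of_nonneg hc dist_nonneg)
      have := abs_nonneg (f x - f x0)
      have : |f x - f x0| = 0 := le_antisymm h1 this
      have := abs_eq_zero.mp this
      linarith
    have : s = 0 := by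
      calc s = ∑ x, f x0 * (μ x - ν x) := by
              apply Finset.sum_congr rfl; intro x _; rw [hconst x]
        _ = f x0 * (∑ x, μ x - ∑ x, ν x) := by
              rw [← Finset.mul_sum, Finset.sum_sub_distrib]
        _ = 0 := by rw [hμ1, hν1]; ring
    linarith
  -- Claim 1 : s ≤ α * T
  have hSbdd : BddAbove {t : ℝ | ∃ g : X → ℝ, (∀ x, |g x| ≤ 1) ∧
      t = ∑ x, g x * (μ x - ν x)} := by
    refine ⟨2, ?_⟩
    rintro t ⟨g, hg, rfl⟩
    calc ∑ x, g x * (μ x - ν x) ≤ ∑ x, (μ x + ν x) := by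
          apply Finset.sum_le_sum; intro x _
          have h1 : g x * (μ x - ν x) ≤ |g x| * |μ x - ν x| := by
            rw [← abs_mul]; exact le_abs_self _
          have h3 : |μ x - ν x| ≤ μ x + ν x := by
            have := abs_sub (μ x) (ν x)
            rw [abs_of_nonneg (hμ0 x), abs_of_nonneg (hν0 x)] at this
            exact this
          nlinarith [abs_nonneg (μ x - ν x), hg x, abs_nonneg (g x)]
      _ = 2 := by rw [Finset.sum_add_distrib, hμ1, hν1]; norm_num
  have claim1 : s ≤ α * T := by
    have hmem : s / α ∈ {t : ℝ | ∃ g : X → ℝ, (∀ x, |g x| ≤ 1) ∧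
        t = ∑ x, g x * (μ x - ν x)} := by
      refine ⟨fun x => f x / α, fun x => ?_, ?_⟩
      · rw [abs_div, abs_of_pos hα0]
        exact div_le_one_of_le₀ (hfα x) hα0.le
      · rw [hs, Finset.sum_div]
        apply Finset.sum_congr rfl; intro x _; ring
    have hle : s / α ≤ T := le_csSup hSbdd hmem
    calc s = α * (s / α) := by field_simp
      _ ≤ α * T := mul_le_mul_of_nonneg_left hle hα0.le
  -- Claim 2 : s ≤ β * W
  have claim2 : s ≤ β * W := by
    have hne : {t : ℝ | ∃ γ : X → X → ℝ, (∀ x y, 0 ≤ γ x y) ∧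
        (∀ x, ∑ y, γ x y = μ x) ∧ (∀ y, ∑ x, γ x y = ν y) ∧
        t = ∑ x, ∑ y, γ x y * dist x y}.Nonempty := by
      refine ⟨_, fun x y => μ x * ν y, fun x y => mul_nonneg (hμ0 x) (hν0 y), ?_, ?_, rfl⟩
      · intro x; rw [← Finset.mul_sum, hν1, mul_one]
      · intro y; rw [← Finset.sum_mul, hμ1, one_mul]
    have hlb : ∀ t ∈ {t : ℝ | ∃ γ : X → X → ℝ, (∀ x y, 0 ≤ γ x y) ∧
        (∀ x, ∑ y, γ x y = μ x) ∧ (∀ y, ∑ x, γ x y = ν y) ∧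
        t = ∑ x, ∑ y, γ x y * dist x y}, s / β ≤ t := by
      rintro t ⟨γ, hγ0, hγμ, hγν, rfl⟩
      rw [div_le_iff₀ hβ0]
      have key : s = ∑ x, ∑ y, γ x y * (f x - f y) := by
        have e1 : ∑ x, f x * μ x = ∑ x, ∑ y, γ x y * f x := by
          apply Finset.sum_congr rfl; intro x _
          rw [← Finset.sum_mul, hγμ x, mul_comm]
        have e2 : ∑ y, f y * ν y = ∑ x, ∑ y, γ x y * f y := by
          rw [Finset.sum_comm]
          apply Finset.sum_congr rfl; intro y _
          rw [← Finset.sum_mul, hγν y, mul_comm]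
        calc s = ∑ x, f x * μ x - ∑ y, f y * ν y := by
                rw [hs, ← Finset.sum_sub_distrib]
                apply Finset.sum_congr rfl; intro x _; ring
          _ = ∑ x, ∑ y, γ x y * f x - ∑ x, ∑ y, γ x y * f y := by rw [e1, e2]
          _ = ∑ x, ∑ y, γ x y * (f x - f y) := by
                rw [← Finset.sum_sub_distrib]
                apply Finset.sum_congr rfl; intro x _
                rw [← Finset.sum_sub_distrib]
                apply Finset.sum_congr rfl; intro y _; ring
      rw [key, Finset.sum_mul]
      apply Finset.sum_le_sum; intro x _
      rw [Finset.sum_mul]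
      apply Finset.sum_le_sum; intro y _
      have h1 : γ x y * (f x - f y) ≤ γ x y * (β * dist x y) := by
        apply mul_le_mul_of_nonneg_left _ (hγ0 x y)
        exact (le_abs_self _).trans (hfβ x y)
      calc γ x y * (f x - f y) ≤ γ x y * (β * dist x y) := h1
        _ = γ x y * dist x y * β := by ring
    have hle : s / β ≤ W := le_csInf hne hlb
    calc s = β * (s / β) := by field_simp
      _ ≤ β * W := mul_le_mul_of_nonneg_left hle hβ0.le
  rw [le_div_iff₀ (by positivity)]
  nlinarith [mul_le_mul_of_nonneg_right claim1 hW.le,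
    mul_le_mul_of_nonneg_right claim2 hTV.le, mul_pos hTV hW]
end
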